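/- arXiv:1002.0017 — 10 statements merged into one kernel-verified Lean document; each statement's English description precedes it below -/
import Mathlib

section
/- If two orthonormal bases E = (e_1,…,e_n) and F = (f_1,…,f_n) of ℂ^n are given, then E and F are mutually unbiased (|⟨e_k, f_j⟩| = 1/√n for all k,j) if and only if the maximal abelian subalgebras 𝒜_E = span{P_{e_j}} and 𝒜_F = span{P_{f_j}} of M_n(ℂ) are quasi-orthogonal. -/
open Matrix BigOperators

noncomputable section

abbrev Mat (n : ℕ) := Matrix (Fin n) (Fin n) ℂ

/-- Two unital *-subalgebras of `M_n(ℂ)` are quasi-orthogonal iff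
`τ(AB) = τ(A)τ(B)` for all members, where `τ = (1/n)Tr`. -/
def QuasiOrth {n : ℕ} (𝒜 ℬ : StarSubalgebra ℂ (Mat n)) : Prop :=
  ∀ A ∈ 𝒜, ∀ B ∈ ℬ, (n : ℂ) * (A * B).trace = A.trace * B.trace

/-- The rank-one orthogonal projection onto the line spanned by a unit vector `v`,
as a matrix. -/
def rankOneProj {n : ℕ} (v : EuclideanSpace ℂ (Fin n)) : Mat n :=
  Matrix.of fun i j => v i * (starRingEnd ℂ) (v j)

/-! Both sides of the quasi-orthogonality identity are bilinear in `(A, B)`, so it suffices to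
check it on the projections `P_{e_k}`, `P_{f_j}`. There `Tr P_v = ‖v‖² = 1` and
`Tr (P_v P_w) = |⟨v, w⟩|²`, so the identity reads `n |⟨e_k, f_j⟩|² = 1`. -/

open Submodule in
theorem LinearMap.eqOn_span₂ {R M N P : Type*} [CommSemiring R] [AddCommMonoid M] [Module R M]
    [AddCommMonoid N] [Module R N] [AddCommMonoid P] [Module R P] {φ ψ : M →ₗ[R] N →ₗ[R] P}
    {s : Set M} {t : Set N} (h : ∀ x ∈ s, ∀ y ∈ t, φ x y = ψ x y) {x : M} {y : N}
    (hx : x ∈ span R s) (hy : y ∈ span R t) : φ x y = ψ x y :=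
  eqOn_span (f := φ.flip y) (g := ψ.flip y)
    (fun x' hx' => eqOn_span (f := φ x') (g := ψ x') (h x' hx') hy) hx

theorem Matrix.mul_trace_mul_eq_of_mem_span {m R : Type*} [Fintype m] [CommRing R] (c : R)
    {s t : Set (Matrix m m R)}
    (h : ∀ A ∈ s, ∀ B ∈ t, c * (A * B).trace = A.trace * B.trace) {A B : Matrix m m R}
    (hA : A ∈ Submodule.span R s) (hB : B ∈ Submodule.span R t) :
    c * (A * B).trace = A.trace * B.trace :=
  LinearMap.eqOn_span₂ (φ := c • (LinearMap.mul R _).compr₂ (traceLinearMap m R R))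
    (ψ := (LinearMap.mul R R).compl₁₂ (traceLinearMap m R R) (traceLinearMap m R R))
    h hA hB

theorem trace_rankOneProj {n : ℕ} (v : EuclideanSpace ℂ (Fin n)) :
    (rankOneProj v).trace = (‖v‖ : ℂ) ^ 2 := by
  have h : (rankOneProj v).trace = @inner ℂ _ _ v v := by
    simp only [Matrix.trace, Matrix.diag, rankOneProj, Matrix.of_apply,
      PiLp.inner_apply, RCLike.inner_apply]
  exact h.trans (inner_self_eq_norm_sq_to_K v)

theorem trace_rankOneProj_mul_rankOneProj {n : ℕ} (v w : EuclideanSpace ℂ (Fin n)) :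
    (rankOneProj v * rankOneProj w).trace = (‖@inner ℂ _ _ v w‖ : ℂ) ^ 2 := by
  rw [← Complex.mul_conj', inner_conj_symm]
  simp only [Matrix.trace, Matrix.diag, Matrix.mul_apply, rankOneProj, Matrix.of_apply,
    PiLp.inner_apply, RCLike.inner_apply]
  rw [Finset.sum_mul_sum, Finset.sum_comm]
  exact Finset.sum_congr rfl fun i _ => Finset.sum_congr rfl fun j _ => by ring

theorem eq_one_div_sqrt_iff_mul_sq_eq_one {x c : ℝ} (hx : 0 ≤ x) (hc : 0 < c) :
    x = 1 / √c ↔ c * x ^ 2 = 1 := by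
  rw [one_div, ← Real.sqrt_inv, eq_comm, Real.sqrt_eq_iff_eq_sq (inv_nonneg.2 hc.le) hx, eq_comm,
    ← one_div, eq_div_iff hc.ne', mul_comm]

theorem mul_trace_rankOneProj_mul_eq_iff {n : ℕ} (hn : 0 < n) {v w : EuclideanSpace ℂ (Fin n)}
    (hv : ‖v‖ = 1) (hw : ‖w‖ = 1) :
    (n : ℂ) * (rankOneProj v * rankOneProj w).trace
        = (rankOneProj v).trace * (rankOneProj w).trace ↔
      ‖@inner ℂ _ _ v w‖ = 1 / √n := by
  rw [trace_rankOneProj_mul_rankOneProj, trace_rankOneProj, trace_rankOneProj, hv, hw,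
    eq_one_div_sqrt_iff_mul_sq_eq_one (norm_nonneg _) (Nat.cast_pos.2 hn)]
  norm_num
  norm_cast

theorem stmt1_general {n : ℕ} (e f : Fin n → EuclideanSpace ℂ (Fin n))
    (he : Orthonormal ℂ e) (hf : Orthonormal ℂ f) :
    (∀ k j, ‖@inner ℂ _ _ (e k) (f j)‖ = 1 / Real.sqrt n) ↔
    (∀ A ∈ Submodule.span ℂ (Set.range fun j => rankOneProj (e j)),
      ∀ B ∈ Submodule.span ℂ (Set.range fun j => rankOneProj (f j)),
        (n : ℂ) * (A * B).trace = A.trace * B.trace) := by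
  have on_generators (k j : Fin n) :=
    mul_trace_rankOneProj_mul_eq_iff k.pos (he.1 k) (hf.1 j)
  constructor
  · intro unbiased A hA B hB
    refine Matrix.mul_trace_mul_eq_of_mem_span _ ?_ hA hB
    rintro _ ⟨k, rfl⟩ _ ⟨j, rfl⟩
    exact (on_generators k j).2 (unbiased k j)
  · intro quasiOrth k j
    exact (on_generators k j).1 <| quasiOrth _ (Submodule.subset_span ⟨k, rfl⟩) _
      (Submodule.subset_span ⟨j, rfl⟩)

/-- two orthonormal bases of `ℂ^n` are mutually unbiased iff the
associated maximal abelian subalgebras are quasi-orthogonal. -/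
theorem stmt1 {n : ℕ} (hn : 0 < n) (e f : Fin n → EuclideanSpace ℂ (Fin n))
    (he : Orthonormal ℂ e) (hf : Orthonormal ℂ f) :
    (∀ k j, ‖@inner ℂ _ _ (e k) (f j)‖ = 1 / Real.sqrt n) ↔
    (∀ A ∈ Submodule.span ℂ (Set.range fun j => rankOneProj (e j)),
      ∀ B ∈ Submodule.span ℂ (Set.range fun j => rankOneProj (f j)),
        (n : ℂ) * (A * B).trace = A.trace * B.trace) :=
  stmt1_general e f he hf
end
end

section
/- If 𝒜 and ℬ are quasi-orthogonal unital *-subalgebras of M_n(ℂ), with orthonormal bases A_1,…,A_d and B_1,…,B_e (with respect to the Hilbert–Schmidt inner product), then the family √n · A_i B_j (1 ≤ i ≤ d, 1 ≤ j ≤ e) is an orthonormal system in M_n(ℂ); in particular dim(𝒜)·dim(ℬ) ≤ n². -/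
open Matrix BigOperators

noncomputable section

/-! Quasi-orthogonality makes the Hilbert–Schmidt inner product multiplicative on products:
by cyclicity `Tr((ab)* a'b') = Tr((a* a')(b' b*))` with `a* a' ∈ 𝒜` and `b' b* ∈ ℬ`, so
`n ⟨ab, a'b'⟩ = ⟨a, a'⟩⟨b, b'⟩`. Orthonormality of the products follows, and a linearly
independent family of `dim 𝒜 · dim ℬ` matrices fits into the `n²`-dimensional `M_n(ℂ)`. -/

namespace Matrix

variable {m R : Type*} [Fintype m]

theorem linearIndependent_of_trace_star_mul_eq_ite [DecidableEq m] [Field R] [StarRing R]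
    {ι : Type*} [Fintype ι] [DecidableEq ι] (v : ι → Matrix m m R)
    (hv : ∀ i i', (star (v i) * v i').trace = if i = i' then 1 else 0) :
    LinearIndependent R v := by
  rw [Fintype.linearIndependent_iff]
  intro g hg j
  have hcoeff : (star (v j) * ∑ i, g i • v i).trace = g j := by
    simp [Matrix.mul_sum, Matrix.trace_sum, hv]
  simpa [hg] using hcoeff.symm

theorem trace_star_mul_mul_eq_trace_mul_mul_star [CommSemiring R] [StarRing R]
    (a b a' b' : Matrix m m R) :
    (star (a * b) * (a' * b')).trace = ((star a * a') * (b' * star b)).trace := by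
  rw [star_mul, Matrix.mul_assoc, trace_mul_comm]
  simp only [Matrix.mul_assoc]

end Matrix

theorem star_sqrt_smul_mul_sqrt_smul {n : ℕ} (X Y : Mat n) :
    star ((Real.sqrt n : ℂ) • X) * ((Real.sqrt n : ℂ) • Y) = (n : ℂ) • (star X * Y) := by
  rw [star_smul, smul_mul_assoc, Matrix.mul_smul, smul_smul, RCLike.star_def,
    Complex.conj_ofReal, ← Complex.ofReal_mul, Real.mul_self_sqrt (Nat.cast_nonneg n),
    Complex.ofReal_natCast]

theorem QuasiOrth.trace_star_mul_mul {n : ℕ} {𝒜 ℬ : StarSubalgebra ℂ (Mat n)}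
    (h : QuasiOrth 𝒜 ℬ) {a a' b b' : Mat n} (ha : a ∈ 𝒜) (ha' : a' ∈ 𝒜)
    (hb : b ∈ ℬ) (hb' : b' ∈ ℬ) :
    (n : ℂ) * (star (a * b) * (a' * b')).trace =
      (star a * a').trace * (star b * b').trace := by
  rw [trace_star_mul_mul_eq_trace_mul_mul_star,
    h _ (mul_mem (star_mem ha) ha') _ (mul_mem hb' (star_mem hb)), trace_mul_comm b']

theorem QuasiOrth.trace_star_sqrt_smul_mul_eq_ite {n : ℕ} {𝒜 ℬ : StarSubalgebra ℂ (Mat n)}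
    (h : QuasiOrth 𝒜 ℬ) {ι κ : Type*} [DecidableEq ι] [DecidableEq κ]
    (A : ι → Mat n) (B : κ → Mat n) (hA : ∀ i, A i ∈ 𝒜) (hB : ∀ j, B j ∈ ℬ)
    (hAon : ∀ i i', (star (A i) * A i').trace = if i = i' then 1 else 0)
    (hBon : ∀ j j', (star (B j) * B j').trace = if j = j' then 1 else 0)
    (p q : ι × κ) :
    (star ((Real.sqrt n : ℂ) • (A p.1 * B p.2)) *
      ((Real.sqrt n : ℂ) • (A q.1 * B q.2))).trace = if p = q then 1 else 0 := by
  rw [star_sqrt_smul_mul_sqrt_smul, trace_smul, smul_eq_mul,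
    h.trace_star_mul_mul (hA _) (hA _) (hB _) (hB _), hAon, hBon, ite_zero_mul_ite_zero, one_mul]
  simp only [Prod.ext_iff]

/-- for quasi-orthogonal subalgebras with Hilbert–Schmidt orthonormal
bases `A_i`, `B_j`, the family `√n • A_i B_j` is orthonormal; in particular
`dim 𝒜 · dim ℬ ≤ n²`. -/
theorem stmt2 {n d e : ℕ} (𝒜 ℬ : StarSubalgebra ℂ (Mat n))
    (h : QuasiOrth 𝒜 ℬ)
    (A : Fin d → Mat n) (B : Fin e → Mat n)
    (hA : ∀ i, A i ∈ 𝒜) (hB : ∀ j, B j ∈ ℬ)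
    (hAon : ∀ i i', (star (A i) * A i').trace = if i = i' then 1 else 0)
    (hBon : ∀ j j', (star (B j) * B j').trace = if j = j' then 1 else 0)
    (hAsp : Submodule.span ℂ (Set.range A) = Subalgebra.toSubmodule 𝒜.toSubalgebra)
    (hBsp : Submodule.span ℂ (Set.range B) = Subalgebra.toSubmodule ℬ.toSubalgebra) :
    (∀ p q : Fin d × Fin e,
      (star ((Real.sqrt n : ℂ) • (A p.1 * B p.2)) *
        ((Real.sqrt n : ℂ) • (A q.1 * B q.2))).trace = if p = q then 1 else 0) ∧
    Module.finrank ℂ 𝒜 * Module.finrank ℂ ℬ ≤ n ^ 2 := by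
  have horth := h.trace_star_sqrt_smul_mul_eq_ite A B hA hB hAon hBon
  have hdimA : Module.finrank ℂ 𝒜 = d := by
    rw [← Fintype.card_fin d,
      ← finrank_span_eq_card (linearIndependent_of_trace_star_mul_eq_ite A hAon), hAsp]
    rfl
  have hdimB : Module.finrank ℂ ℬ = e := by
    rw [← Fintype.card_fin e,
      ← finrank_span_eq_card (linearIndependent_of_trace_star_mul_eq_ite B hBon), hBsp]
    rfl
  refine ⟨horth, ?_⟩
  have hle := (linearIndependent_of_trace_star_mul_eq_ite _ horth).fintype_card_le_finrank
  simpa [hdimA, hdimB, Module.finrank_matrix, sq] using hle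
end
end

section
/- For n > 1, the number of pairwise mutually unbiased orthonormal bases of ℂ^n is at most n+1. -/
/-!
Send a unit vector `e` of `𝕜^m` to the matrix `e e*`, viewed as a vector of `𝕜^(m × m)` with the
Frobenius inner product. Then `⟪e e*, f f*⟫ = |⟪e, f⟫|²` and `⟪1, e e*⟫ = 1`, so each orthonormal
basis becomes an orthonormal family, and the centred vectors `e e* - m⁻¹ • 1` coming from two
mutually unbiased bases are orthogonal to each other and to `1`. Each basis therefore spans a
subspace of `1ᗮ` of dimension at least `m - 1`, these subspaces are pairwise orthogonal, and
`1ᗮ` has dimension `m² - 1`; hence `N (m - 1) ≤ m² - 1`, i.e. `N ≤ m + 1`.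
-/

open Module Submodule
open scoped InnerProductSpace ComplexConjugate Function

section OrthogonalSubspaces

variable {𝕜 F : Type*} [RCLike 𝕜] [NormedAddCommGroup F] [InnerProductSpace 𝕜 F]
  [FiniteDimensional 𝕜 F]

theorem Submodule.sum_finrank_le_of_pairwise_isOrtho {ι : Type*} [Fintype ι]
    {V : ι → Submodule 𝕜 F} (hV : Pairwise ((· ⟂ ·) on V)) {K : Submodule 𝕜 F}
    (hVK : ∀ i, V i ≤ K) : ∑ i, finrank 𝕜 (V i) ≤ finrank 𝕜 K := by
  let v : (Σ i, Fin (finrank 𝕜 (V i))) → F := fun a => stdOrthonormalBasis 𝕜 (V a.1) a.2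
  have hv : Orthonormal 𝕜 v := (orthogonalFamily_iff_pairwise.2 hV).orthonormal_sigma_orthonormal
    fun i => (stdOrthonormalBasis 𝕜 (V i)).orthonormal
  have hvK : span 𝕜 (Set.range v) ≤ K :=
    span_le.2 <| Set.range_subset_iff.2 fun a => hVK a.1 (stdOrthonormalBasis 𝕜 (V a.1) a.2).2
  calc ∑ i, finrank 𝕜 (V i) = Fintype.card (Σ i, Fin (finrank 𝕜 (V i))) := by simp
    _ = finrank 𝕜 (span 𝕜 (Set.range v)) := (finrank_span_eq_card hv.linearIndependent).symm
    _ ≤ finrank 𝕜 K := finrank_mono hvK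

theorem Submodule.finrank_span_range_le_finrank_span_range_sub_smul_add_one {K V κ : Type*}
    [DivisionRing K] [AddCommGroup V] [Module K V] [FiniteDimensional K V] (v : κ → V)
    (c : κ → K) (w : V) :
    finrank K (span K (Set.range v)) ≤ finrank K (span K (Set.range fun k => v k - c k • w)) + 1 :=
  calc finrank K (span K (Set.range v))
      ≤ finrank K ↥(span K (Set.range fun k => v k - c k • w) ⊔ K ∙ w) := by
        refine finrank_mono (span_le.2 (Set.range_subset_iff.2 fun k => ?_))
        rw [← sub_add_cancel (v k) (c k • w)]
        exact add_mem (mem_sup_left (subset_span ⟨k, rfl⟩))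
          (mem_sup_right (smul_mem _ _ (mem_span_singleton_self w)))
    _ ≤ finrank K (span K (Set.range fun k => v k - c k • w)) + finrank K (K ∙ w) :=
        finrank_add_le_finrank_add_finrank _ _
    _ ≤ _ := by
        grw [finrank_span_le_card ({w} : Set V)]
        simp

theorem card_mul_card_sub_one_le_finrank_sub_one {ι κ : Type*} [Fintype ι] [Fintype κ]
    {x : ι → κ → F} {w : F} (hw : w ≠ 0) (hx : ∀ i, Orthonormal 𝕜 (x i))
    (hwx : ∀ i k, ⟪w, x i k⟫_𝕜 = 1)
    (hcross : ∀ i j, i ≠ j → ∀ k l, ⟪x i k, x j l⟫_𝕜 = ((‖w‖ : 𝕜) ^ 2)⁻¹) :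
    Fintype.card ι * (Fintype.card κ - 1) ≤ finrank 𝕜 F - 1 := by
  set c : 𝕜 := ((‖w‖ : 𝕜) ^ 2)⁻¹ with hc_def
  have hc : c * ⟪w, w⟫_𝕜 = 1 := by
    rw [inner_self_eq_norm_sq_to_K, hc_def, inv_mul_cancel₀ (by simpa using hw)]
  have hc_conj : conj c = c := by simp [c]
  let D : ι → Submodule 𝕜 F := fun i => span 𝕜 (Set.range fun k => x i k - c • w)
  have hwd : ∀ i k, ⟪w, x i k - c • w⟫_𝕜 = 0 := fun i k => by
    rw [inner_sub_right, inner_smul_right, hwx, hc, sub_self]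
  have hdx : ∀ i j, i ≠ j → ∀ k l, ⟪x i k - c • w, x j l⟫_𝕜 = 0 := fun i j hij k l => by
    rw [inner_sub_left, inner_smul_left, hcross i j hij, hwx, hc_conj, mul_one, sub_self]
  have hD_ortho : Pairwise ((· ⟂ ·) on D) := fun i j hij => by
    refine isOrtho_span.2 ?_
    rintro _ ⟨k, rfl⟩ _ ⟨l, rfl⟩
    rw [inner_sub_right, inner_smul_right, hdx i j hij, inner_eq_zero_symm.1 (hwd i k), mul_zero,
      sub_zero]
  have hD_le : ∀ i, D i ≤ (𝕜 ∙ w)ᗮ := fun i =>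
    span_le.2 <| Set.range_subset_iff.2 fun k =>
      mem_orthogonal_singleton_iff_inner_right.2 (hwd i k)
  have hD_finrank : ∀ i, Fintype.card κ - 1 ≤ finrank 𝕜 (D i) := fun i => by
    have := finrank_span_range_le_finrank_span_range_sub_smul_add_one (x i) (fun _ => c) w
    rw [finrank_span_eq_card (hx i).linearIndependent] at this
    exact Nat.sub_le_of_le_add this
  have h_perp : finrank 𝕜 (𝕜 ∙ w)ᗮ = finrank 𝕜 F - 1 := by
    have := finrank_add_finrank_orthogonal (𝕜 ∙ w)
    rw [finrank_span_singleton hw] at this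
    omega
  calc Fintype.card ι * (Fintype.card κ - 1) = ∑ _ : ι, (Fintype.card κ - 1) := by simp
    _ ≤ ∑ i, finrank 𝕜 (D i) := Finset.sum_le_sum fun i _ => hD_finrank i
    _ ≤ finrank 𝕜 (𝕜 ∙ w)ᗮ := sum_finrank_le_of_pairwise_isOrtho hD_ortho hD_le
    _ = finrank 𝕜 F - 1 := h_perp

end OrthogonalSubspaces

section OuterProduct

variable {𝕜 m : Type*} [RCLike 𝕜] [Fintype m]

def OrthonormalBasis.IsMutuallyUnbiased (b b' : OrthonormalBasis m 𝕜 (EuclideanSpace 𝕜 m)) :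
    Prop :=
  ∀ k l, ‖⟪b k, b' l⟫_𝕜‖ ^ 2 = (Fintype.card m : ℝ)⁻¹

def outerSelf (e : EuclideanSpace 𝕜 m) : EuclideanSpace 𝕜 (m × m) :=
  WithLp.toLp 2 fun p => e p.1 * conj (e p.2)

def vecOne [DecidableEq m] : EuclideanSpace 𝕜 (m × m) :=
  WithLp.toLp 2 fun p => if p.1 = p.2 then 1 else 0

theorem inner_outerSelf_outerSelf (e f : EuclideanSpace 𝕜 m) :
    ⟪outerSelf e, outerSelf f⟫_𝕜 = (‖⟪e, f⟫_𝕜‖ : 𝕜) ^ 2 := by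
  rw [← RCLike.mul_conj]
  simp only [outerSelf, PiLp.inner_apply, RCLike.inner_apply, map_sum, map_mul, RCLike.conj_conj,
    Fintype.sum_prod_type, Finset.sum_mul_sum]
  refine Finset.sum_congr rfl fun a _ => Finset.sum_congr rfl fun c _ => by ring

theorem inner_vecOne_outerSelf [DecidableEq m] (e : EuclideanSpace 𝕜 m) :
    ⟪vecOne, outerSelf e⟫_𝕜 = (‖e‖ : 𝕜) ^ 2 := by
  rw [← inner_self_eq_norm_sq_to_K]
  simp [vecOne, outerSelf, PiLp.inner_apply, Fintype.sum_prod_type, mul_comm,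
    -inner_self_eq_norm_sq_to_K]

theorem norm_vecOne_sq [DecidableEq m] :
    ‖(vecOne : EuclideanSpace 𝕜 (m × m))‖ ^ 2 = Fintype.card m := by
  rw [EuclideanSpace.norm_sq_eq]
  simp only [vecOne, Fintype.sum_prod_type, apply_ite (fun z : 𝕜 => ‖z‖ ^ 2)]
  simp

theorem card_mul_card_sub_one_le_of_isMutuallyUnbiased [DecidableEq m] [Nonempty m] {ι : Type*}
    [Fintype ι] (b : ι → OrthonormalBasis m 𝕜 (EuclideanSpace 𝕜 m))
    (h : Pairwise fun i j => (b i).IsMutuallyUnbiased (b j)) :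
    Fintype.card ι * (Fintype.card m - 1) ≤ Fintype.card m * Fintype.card m - 1 := by
  have h_norm : (‖(vecOne : EuclideanSpace 𝕜 (m × m))‖ : 𝕜) ^ 2 = Fintype.card m := by
    exact_mod_cast norm_vecOne_sq
  have hw : (vecOne : EuclideanSpace 𝕜 (m × m)) ≠ 0 := by
    rw [← norm_ne_zero_iff, ← pow_ne_zero_iff two_ne_zero, norm_vecOne_sq]
    exact_mod_cast Fintype.card_ne_zero
  have hx : ∀ i, Orthonormal 𝕜 fun k => outerSelf (b i k) := fun i => by
    refine orthonormal_iff_ite.2 fun k l => ?_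
    rw [inner_outerSelf_outerSelf, orthonormal_iff_ite.1 (b i).orthonormal]
    split_ifs <;> simp
  have := card_mul_card_sub_one_le_finrank_sub_one hw hx
    (fun i k => by rw [inner_vecOne_outerSelf, (b i).orthonormal.1 k, RCLike.ofReal_one, one_pow])
    (fun i j hij k l => by
      rw [inner_outerSelf_outerSelf, h_norm, ← RCLike.ofReal_pow, h hij k l, RCLike.ofReal_inv,
        RCLike.ofReal_natCast])
  rwa [finrank_euclideanSpace, Fintype.card_prod] at this

end OuterProduct

/-- for `n > 1` there are at most `n + 1` pairwise mutually unbiased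
orthonormal bases of `ℂ^n`. -/
theorem stmt4 {n : ℕ} (hn : 1 < n) {ι : Type*} [Fintype ι]
    (b : ι → OrthonormalBasis (Fin n) ℂ (EuclideanSpace ℂ (Fin n)))
    (h : ∀ i j, i ≠ j → ∀ k l, ‖@inner ℂ _ _ (b i k) (b j l)‖ = 1 / Real.sqrt n) :
    Fintype.card ι ≤ n + 1 := by
  have : Nonempty (Fin n) := ⟨⟨0, by omega⟩⟩
  have h_unbiased : Pairwise fun i j => (b i).IsMutuallyUnbiased (b j) := fun i j hij k l => by
    rw [h i j hij k l, div_pow, one_pow, Real.sq_sqrt n.cast_nonneg, Fintype.card_fin, one_div]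
  have h_card := card_mul_card_sub_one_le_of_isMutuallyUnbiased b h_unbiased
  have h_factor : n * n - 1 = (n + 1) * (n - 1) := by simpa using mul_self_tsub_mul_self n 1
  rw [Fintype.card_fin, h_factor] at h_card
  exact Nat.le_of_mul_le_mul_right h_card (by omega)
end

section
/- Let n > 2. There is no pair (𝒜, ℬ) of quasi-orthogonal unital *-subalgebras of M_{2n}(ℂ) where 𝒜 is abelian of dimension n+1 and ℬ is a subalgebra isomorphic to M_n(ℂ). -/
open Matrix BigOperators

noncomputable section

/-!
An abelian `*`-subalgebra `𝒜 ⊆ M_{2n}(ℂ)` is reduced, so by the structure theory of Artinian rings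
`𝒜 ≅ ℂ^{n+1}` contains `n + 1` nonzero orthogonal idempotents `Pᵢ` with `∑ Pᵢ = 1`; hence
`∑ rank Pᵢ = Tr 1 = 2n`. Quasi-orthogonality makes `B ↦ B Pᵢ` injective on `ℬ`: if `B Pᵢ = 0`
then `Tr Pᵢ · Tr (B* B) = 2n · Tr (Pᵢ B* B) = 2n · Tr (B Pᵢ B*) = 0`. As `B Pᵢ` only depends on
`B` restricted to the range of `Pᵢ`, this gives `n² = dim ℬ ≤ 2n · rank Pᵢ`, so `rank Pᵢ ≥ 2`
once `n > 2`, and then `2 (n + 1) ≤ ∑ rank Pᵢ = 2n`.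
-/

open Module
open scoped ComplexOrder

attribute [local instance] Ideal.Quotient.field in
theorem nonempty_algEquiv_pi_of_isReduced (K R : Type*) [Field K] [IsAlgClosed K] [CommRing R]
    [Algebra K R] [FiniteDimensional K R] [IsReduced R] :
    Nonempty (R ≃ₐ[K] (MaximalSpectrum R → K)) := by
  have : IsArtinianRing R := .of_finite K R
  exact ⟨((IsArtinianRing.equivPi R).restrictScalars K).trans <|
    AlgEquiv.piCongrRight fun _ => (AlgEquiv.ofBijective (Algebra.ofId K _)
      IsAlgClosed.algebraMap_bijective_of_isIntegral).symm⟩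

theorem Subalgebra.exists_completeOrthogonalIdempotents {K A : Type*} [Field K] [IsAlgClosed K]
    [Ring A] [Algebra K A] (S : Subalgebra K A) [FiniteDimensional K S]
    (hcomm : ∀ x ∈ S, ∀ y ∈ S, x * y = y * x) (hred : ∀ x ∈ S, x * x = 0 → x = 0) :
    ∃ e : Fin (finrank K S) → A,
      CompleteOrthogonalIdempotents e ∧ (∀ i, e i ∈ S) ∧ ∀ i, e i ≠ 0 := by
  classical
  let _ : CommRing S := { (inferInstance : Ring S) with
    mul_comm := fun x y => Subtype.ext (hcomm x x.2 y y.2) }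
  have : IsReduced S := (isReduced_iff_pow_one_lt 2 one_lt_two).2 fun x hx =>
    Subtype.ext (hred x x.2 (by simpa [sq] using congrArg Subtype.val hx))
  obtain ⟨φ⟩ := nonempty_algEquiv_pi_of_isReduced K S
  have : IsArtinianRing S := .of_finite K S
  have : Fintype (MaximalSpectrum S) := Fintype.ofFinite _
  have hcard : Fintype.card (MaximalSpectrum S) = finrank K S := by
    rw [φ.toLinearEquiv.finrank_eq, finrank_fintype_fun_eq_card]
  let σ := (Fintype.equivFinOfCardEq hcard).symm
  refine ⟨fun i => (φ.symm (Pi.single (σ i) 1) : A), ?_, fun i => SetLike.coe_mem _, fun i => ?_⟩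
  · exact (CompleteOrthogonalIdempotents.equiv σ).2 <|
      (CompleteOrthogonalIdempotents.single fun _ => K).map
        (S.val.toRingHom.comp φ.symm.toRingEquiv.toRingHom)
  · simp

namespace Matrix

theorem eq_zero_of_mul_self_eq_zero_of_commute {m 𝕜 : Type*} [Fintype m] [RCLike 𝕜]
    {x : Matrix m m 𝕜} (hx : Commute x xᴴ) (hxx : x * x = 0) : x = 0 := by
  have : (xᴴ * x)ᴴ * (xᴴ * x) = 0 := by
    rw [conjTranspose_mul, conjTranspose_conjTranspose, mul_assoc, ← mul_assoc x, hx.eq,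
      mul_assoc, hxx, mul_zero, mul_zero]
  exact conjTranspose_mul_self_eq_zero.1 (conjTranspose_mul_self_eq_zero.1 this)

variable {m n K : Type*} [Fintype m] [DecidableEq m] [Field K]

theorem trace_eq_rank_of_isIdempotentElem {P : Matrix m m K} (hP : IsIdempotentElem P) :
    P.trace = P.rank := by
  have hP' : IsIdempotentElem (toLin' P) := hP.map toLinAlgEquiv'
  rw [← trace_toLin'_eq, (LinearMap.IsIdempotentElem.isProj_range _ hP').trace]
  rfl

theorem trace_eq_zero_iff_of_isIdempotentElem [CharZero K] {P : Matrix m m K}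
    (hP : IsIdempotentElem P) : P.trace = 0 ↔ P = 0 := by
  have hP' : IsIdempotentElem (toLin' P) := hP.map toLinAlgEquiv'
  rw [← trace_toLin'_eq, LinearMap.IsIdempotentElem.trace_eq_zero_iff hP',
    LinearEquiv.map_eq_zero_iff]

theorem finrank_le_card_mul_rank [Fintype n] [DecidableEq n] {l : Type*} [Fintype l]
    {P : Matrix m n K} (V : Submodule K (Matrix l m K)) (hV : ∀ B ∈ V, B * P = 0 → B = 0) :
    finrank K V ≤ Fintype.card l * P.rank := by
  let restrict : V →ₗ[K] (LinearMap.range (toLin' P) →ₗ[K] (l → K)) :=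
    (LinearMap.lcomp K (l → K) (LinearMap.range (toLin' P)).subtype).comp
      (toLin'.toLinearMap.comp V.subtype)
  have hinj : Function.Injective restrict := by
    rw [← LinearMap.ker_eq_bot, LinearMap.ker_eq_bot']
    intro B hB
    refine Subtype.ext (hV B B.2 (toLin'.injective (LinearMap.ext fun v => ?_)))
    simpa [restrict] using LinearMap.congr_fun hB ⟨toLin' P v, v, rfl⟩
  calc finrank K V ≤ _ := LinearMap.finrank_le_finrank_of_injective hinj
    _ = Fintype.card l * P.rank := by
      rw [finrank_linearMap, finrank_fintype_fun_eq_card, mul_comm]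
      rfl

end Matrix

theorem QuasiOrth.eq_zero_of_mul_eq_zero {N : ℕ} {𝒜 ℬ : StarSubalgebra ℂ (Mat N)}
    (h : QuasiOrth 𝒜 ℬ) {P : Mat N} (hP : P ∈ 𝒜) (htr : P.trace ≠ 0) {B : Mat N} (hB : B ∈ ℬ)
    (hBP : B * P = 0) : B = 0 := by
  have := h P hP (Bᴴ * B) (mul_mem (star_mem hB) hB)
  rw [← mul_assoc, trace_mul_cycle, hBP, zero_mul, trace_zero, mul_zero, eq_comm,
    mul_eq_zero] at this
  exact trace_conjTranspose_mul_self_eq_zero_iff.1 (this.resolve_left htr)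

theorem QuasiOrth.finrank_le_mul_rank {N : ℕ} {𝒜 ℬ : StarSubalgebra ℂ (Mat N)}
    (h : QuasiOrth 𝒜 ℬ) {P : Mat N} (hP𝒜 : P ∈ 𝒜) (hP : IsIdempotentElem P) (hP0 : P ≠ 0) :
    finrank ℂ ℬ ≤ N * P.rank := by
  have htr := (trace_eq_zero_iff_of_isIdempotentElem hP).not.2 hP0
  have := Matrix.finrank_le_card_mul_rank (Subalgebra.toSubmodule ℬ.toSubalgebra)
    fun B hB => h.eq_zero_of_mul_eq_zero hP𝒜 htr hB
  rwa [Fintype.card_fin] at this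

/-- for `n > 2`, there is no quasi-orthogonal pair `(𝒜, ℬ)` in
`M_{2n}(ℂ)` with `𝒜` abelian of dimension `n + 1` and `ℬ ≅ M_n(ℂ)`. -/
theorem stmt5 {n : ℕ} (hn : 2 < n) :
    ¬ ∃ (𝒜 ℬ : StarSubalgebra ℂ (Mat (2 * n))),
      QuasiOrth 𝒜 ℬ ∧
      (∀ x ∈ 𝒜, ∀ y ∈ 𝒜, x * y = y * x) ∧
      Module.finrank ℂ 𝒜 = n + 1 ∧
      Nonempty (ℬ ≃⋆ₐ[ℂ] Mat n) := by
  rintro ⟨𝒜, ℬ, hQO, hcomm, hdim, ⟨φ⟩⟩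
  obtain ⟨e, he, he𝒜, he0⟩ := 𝒜.toSubalgebra.exists_completeOrthogonalIdempotents hcomm
    fun x hx => eq_zero_of_mul_self_eq_zero_of_commute (hcomm x hx _ (star_mem hx))
  have hdimℬ : finrank ℂ ℬ = n * n := by
    rw [φ.toAlgEquiv.toLinearEquiv.finrank_eq, finrank_matrix]
    simp
  have hrank : ∀ i, 2 ≤ (e i).rank := fun i => by
    have := hQO.finrank_le_mul_rank (he𝒜 i) (he.idem i) (he0 i)
    rw [hdimℬ] at this
    by_contra! h
    nlinarith
  have hsum : ∑ i, (e i).rank = 2 * n := by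
    have := congrArg trace he.complete
    rw [trace_sum, trace_one, Fintype.card_fin] at this
    simp only [trace_eq_rank_of_isIdempotentElem (he.idem _)] at this
    exact_mod_cast this
  have hsum_ge : ∑ i, 2 ≤ ∑ i, (e i).rank := Finset.sum_le_sum fun i _ => hrank i
  have hcard : finrank ℂ 𝒜.toSubalgebra = n + 1 := hdim
  simp only [Finset.sum_const, Finset.card_univ, Fintype.card_fin, smul_eq_mul, hcard] at hsum_ge
  omega
end
end

section
/- Let 𝒜 and ℬ be quasi-orthogonal unital *-subalgebras of M_{2n}(ℂ) with ℬ a factor isomorphic to M_n(ℂ), and let P ∈ 𝒜 be a rank-one orthogonal projection. Then the linear map B ↦ Bx is injective on ℬ, where x is a unit vector spanning the range of P. -/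
open Matrix BigOperators

noncomputable section

open scoped ComplexOrder in
/-- If `Bx = 0` then `τ(P B^*B) = ⟨x, B^*Bx⟩ = 0`, while quasi-orthogonality makes it a nonzero
multiple of `τ(B^*B)`; hence `B^*B` has trace zero and `B = 0`. -/
theorem QuasiOrth.eq_zero_of_mulVec_eq_zero {n : ℕ} {𝒜 ℬ : StarSubalgebra ℂ (Mat n)}
    (h : QuasiOrth 𝒜 ℬ) {x : Fin n → ℂ} (hx : x ≠ 0) (hP : vecMulVec x (star x) ∈ 𝒜)
    {B : Mat n} (hB : B ∈ ℬ) (hBx : B *ᵥ x = 0) : B = 0 := by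
  have key := h _ hP (Bᴴ * B) (mul_mem (star_mem hB) hB)
  rw [trace_mul_comm, mul_vecMulVec, ← mulVec_mulVec, hBx, mulVec_zero, trace_vecMulVec,
    zero_dotProduct, mul_zero, trace_vecMulVec] at key
  have hxx : x ⬝ᵥ star x ≠ 0 := by
    rwa [dotProduct_comm, Ne, dotProduct_star_self_eq_zero]
  exact trace_conjTranspose_mul_self_eq_zero_iff.mp ((mul_eq_zero.mp key.symm).resolve_left hxx)

theorem QuasiOrth.injOn_mulVec {n : ℕ} {𝒜 ℬ : StarSubalgebra ℂ (Mat n)}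
    (h : QuasiOrth 𝒜 ℬ) {x : Fin n → ℂ} (hx : x ≠ 0) (hP : vecMulVec x (star x) ∈ 𝒜) :
    Set.InjOn (· *ᵥ x) (ℬ : Set (Mat n)) := fun B₁ hB₁ B₂ hB₂ hBx =>
  sub_eq_zero.mp <| h.eq_zero_of_mulVec_eq_zero hx hP (sub_mem hB₁ hB₂) <| by
    rw [sub_mulVec, sub_eq_zero]
    exact hBx

theorem stmt6_general {n : ℕ} (𝒜 ℬ : StarSubalgebra ℂ (Mat (2 * n)))
    (h : QuasiOrth 𝒜 ℬ)
    (x : Fin (2 * n) → ℂ) (hx : ∑ i, star (x i) * x i = 1)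
    (P : Mat (2 * n)) (hP : P = Matrix.of fun i j => x i * star (x j))
    (hPA : P ∈ 𝒜) :
    ∀ B₁ ∈ ℬ, ∀ B₂ ∈ ℬ, B₁.mulVec x = B₂.mulVec x → B₁ = B₂ := by
  have hx0 : x ≠ 0 := by
    rintro rfl
    simp at hx
  subst hP
  exact h.injOn_mulVec hx0 hPA

/-- if `𝒜, ℬ ⊆ M_{2n}(ℂ)` are quasi-orthogonal with `ℬ` a factor
isomorphic to `M_n(ℂ)`, and `P ∈ 𝒜` is the rank-one orthogonal projection onto
the line of a unit vector `x`, then `B ↦ Bx` is injective on `ℬ`. -/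
theorem stmt6 {n : ℕ} (𝒜 ℬ : StarSubalgebra ℂ (Mat (2 * n)))
    (h : QuasiOrth 𝒜 ℬ)
    (hfac : Nonempty (ℬ ≃⋆ₐ[ℂ] Mat n))
    (x : Fin (2 * n) → ℂ) (hx : ∑ i, star (x i) * x i = 1)
    (P : Mat (2 * n)) (hP : P = Matrix.of fun i j => x i * star (x j))
    (hPA : P ∈ 𝒜) :
    ∀ B₁ ∈ ℬ, ∀ B₂ ∈ ℬ, B₁.mulVec x = B₂.mulVec x → B₁ = B₂ :=
  stmt6_general 𝒜 ℬ h x hx P hP hPA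
end
end

section
/- Let 𝒜_1, 𝒜_2 be quasi-orthogonal unital *-subalgebras of M_n(ℂ), and suppose A_1 ∈ 𝒜_1 and A_2 ∈ 𝒜_2 are traceless elements satisfying A_1A_2 = 0. Then A_1 = 0 or A_2 = 0. -/
open Matrix BigOperators

noncomputable section

lemma QuasiOrth.natCast_mul_trace_conjTranspose_mul_self_mul {n : ℕ}
    {𝒜 ℬ : StarSubalgebra ℂ (Mat n)} (h : QuasiOrth 𝒜 ℬ) {A B : Mat n}
    (hA : A ∈ 𝒜) (hB : B ∈ ℬ) :
    (n : ℂ) * ((A * B)ᴴ * (A * B)).trace = (Aᴴ * A).trace * (B * Bᴴ).trace := by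
  have cyclic : ((A * B)ᴴ * (A * B)).trace = (Aᴴ * A * (B * Bᴴ)).trace := by
    rw [conjTranspose_mul, Matrix.mul_assoc, trace_mul_comm]
    simp only [Matrix.mul_assoc]
  rw [cyclic]
  exact h _ (mul_mem (star_mem hA) hA) _ (mul_mem hB (star_mem hB))

theorem stmt10_general {n : ℕ} (𝒜₁ 𝒜₂ : StarSubalgebra ℂ (Mat n))
    (h : QuasiOrth 𝒜₁ 𝒜₂)
    (A₁ A₂ : Mat n) (h1 : A₁ ∈ 𝒜₁) (h2 : A₂ ∈ 𝒜₂)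
    (hzero : A₁ * A₂ = 0) :
    A₁ = 0 ∨ A₂ = 0 := by
  have key := h.natCast_mul_trace_conjTranspose_mul_self_mul h1 h2
  rw [hzero, Matrix.mul_zero, trace_zero, mul_zero, eq_comm, mul_eq_zero] at key
  open scoped ComplexOrder in
  simpa only [trace_conjTranspose_mul_self_eq_zero_iff,
    trace_mul_conjTranspose_self_eq_zero_iff] using key

/-- for quasi-orthogonal `𝒜₁, 𝒜₂` and traceless `A₁ ∈ 𝒜₁`,
`A₂ ∈ 𝒜₂`, if `A₁A₂ = 0` then `A₁ = 0` or `A₂ = 0`. -/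
theorem stmt10 {n : ℕ} (𝒜₁ 𝒜₂ : StarSubalgebra ℂ (Mat n))
    (h : QuasiOrth 𝒜₁ 𝒜₂)
    (A₁ A₂ : Mat n) (h1 : A₁ ∈ 𝒜₁) (h2 : A₂ ∈ 𝒜₂)
    (t1 : A₁.trace = 0) (t2 : A₂.trace = 0)
    (hzero : A₁ * A₂ = 0) :
    A₁ = 0 ∨ A₂ = 0 :=
  stmt10_general 𝒜₁ 𝒜₂ h A₁ A₂ h1 h2 hzero
end
end

section
/- Let 𝒜_1, 𝒜_2 be quasi-orthogonal unital *-subalgebras of M_n(ℂ) and ℬ a unital *-subalgebra with ℬ ⊆ 𝒜_1 + 𝒜_2 (as a linear subspace). Then either ℬ ⊆ 𝒜_1, or ℬ ⊆ 𝒜_2, or ℬ ∩ 𝒜_1 = ℬ ∩ 𝒜_2 = ℂ·1. -/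
/-!
A traceless non-zero `x ∈ ℬ ∩ 𝒜₁` forces `ℬ ⊆ 𝒜₁`. Write `b ∈ ℬ` as `a₁ + a₂` with `a₂ ∈ 𝒜₂`
traceless. Then `x a₂ = x b - x a₁` lies in `𝒜₁ + 𝒜₂`, and quasi-orthogonality makes `x a₂`
Hilbert–Schmidt orthogonal to both `𝒜₁` and `𝒜₂`, so `x a₂ = 0`. Finally
`n Tr(x*x a₂a₂*) = Tr(x*x) Tr(a₂a₂*)` with `Tr(x*x) ≠ 0` gives `a₂ = 0`, i.e. `b ∈ 𝒜₁`.
-/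

open Matrix BigOperators

noncomputable section

open scoped ComplexOrder

variable {n : ℕ}

def tracelessPart (x : Mat n) : Mat n := x - (x.trace / n) • 1

lemma trace_tracelessPart (hn : (n : ℂ) ≠ 0) (x : Mat n) : (tracelessPart x).trace = 0 := by
  simp [tracelessPart, trace_sub, trace_smul, div_mul_cancel₀ _ hn]

lemma tracelessPart_mem {S : Subalgebra ℂ (Mat n)} {x : Mat n} (hx : x ∈ S) :
    tracelessPart x ∈ S :=
  sub_mem hx (S.smul_mem S.one_mem _)

namespace QuasiOrth

variable {𝒜 ℬ : StarSubalgebra ℂ (Mat n)}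

lemma symm (h : QuasiOrth 𝒜 ℬ) : QuasiOrth ℬ 𝒜 := fun B hB A hA => by
  rw [trace_mul_comm, mul_comm B.trace]
  exact h A hA B hB

lemma trace_mul_eq_zero_of_trace_left (h : QuasiOrth 𝒜 ℬ) (hn : (n : ℂ) ≠ 0) {A B : Mat n}
    (hA : A ∈ 𝒜) (hB : B ∈ ℬ) (hA0 : A.trace = 0) : (A * B).trace = 0 := by
  simpa [hA0, hn] using h A hA B hB

lemma trace_mul_eq_zero_of_trace_right (h : QuasiOrth 𝒜 ℬ) (hn : (n : ℂ) ≠ 0) {A B : Mat n}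
    (hA : A ∈ 𝒜) (hB : B ∈ ℬ) (hB0 : B.trace = 0) : (A * B).trace = 0 := by
  simpa [hB0, hn] using h A hA B hB

lemma eq_zero_of_mul_eq_zero_s11 (h : QuasiOrth 𝒜 ℬ) {x a : Mat n} (hx : x ∈ 𝒜) (hx0 : x ≠ 0)
    (ha : a ∈ ℬ) (hxa : x * a = 0) : a = 0 := by
  have hq := h (xᴴ * x) (mul_mem (star_mem hx) hx) (a * aᴴ) (mul_mem ha (star_mem ha))
  have hzero : xᴴ * x * (a * aᴴ) = 0 := by
    rw [mul_assoc, ← mul_assoc x, hxa, zero_mul, mul_zero]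
  rw [hzero, trace_zero, mul_zero, eq_comm, mul_eq_zero] at hq
  rcases hq with hx' | ha'
  · exact absurd (trace_conjTranspose_mul_self_eq_zero_iff.mp hx') hx0
  · exact trace_mul_conjTranspose_self_eq_zero_iff.mp ha'

lemma mul_eq_zero_of_mul_mem_sup (h : QuasiOrth 𝒜 ℬ) (hn : (n : ℂ) ≠ 0) {x a : Mat n}
    (hx : x ∈ 𝒜) (hx0 : x.trace = 0) (ha : a ∈ ℬ) (ha0 : a.trace = 0)
    (hxa : x * a ∈ Subalgebra.toSubmodule 𝒜.toSubalgebra ⊔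
      Subalgebra.toSubmodule ℬ.toSubalgebra) : x * a = 0 := by
  obtain ⟨d₁, hd₁, d₂, hd₂, hd⟩ := Submodule.mem_sup.mp hxa
  have hxs0 : xᴴ.trace = 0 := by rw [trace_conjTranspose, hx0, star_zero]
  have has0 : aᴴ.trace = 0 := by rw [trace_conjTranspose, ha0, star_zero]
  have h₁ : ((x * a)ᴴ * d₁).trace = 0 := by
    rw [conjTranspose_mul, mul_assoc, trace_mul_comm]
    exact h.trace_mul_eq_zero_of_trace_right hn (mul_mem (star_mem hx) hd₁) (star_mem ha) has0
  have h₂ : ((x * a)ᴴ * d₂).trace = 0 := by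
    rw [conjTranspose_mul, mul_assoc, trace_mul_comm, mul_assoc]
    exact h.trace_mul_eq_zero_of_trace_left hn (star_mem hx) (mul_mem hd₂ (star_mem ha)) hxs0
  rw [← trace_conjTranspose_mul_self_eq_zero_iff]
  calc ((x * a)ᴴ * (x * a)).trace = ((x * a)ᴴ * d₁).trace + ((x * a)ᴴ * d₂).trace := by
        rw [← hd, mul_add, trace_add]
    _ = 0 := by rw [h₁, h₂, add_zero]

lemma mem_left_of_traceless_mem (h : QuasiOrth 𝒜 ℬ) (hn : (n : ℂ) ≠ 0)
    {𝒞 : StarSubalgebra ℂ (Mat n)}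
    (hsub : Subalgebra.toSubmodule 𝒞.toSubalgebra ≤
      Subalgebra.toSubmodule 𝒜.toSubalgebra ⊔ Subalgebra.toSubmodule ℬ.toSubalgebra)
    {x : Mat n} (hx𝒞 : x ∈ 𝒞) (hx𝒜 : x ∈ 𝒜) (hx0 : x.trace = 0) (hx : x ≠ 0)
    {b : Mat n} (hb : b ∈ 𝒞) : b ∈ 𝒜 := by
  obtain ⟨a₁, ha₁ : a₁ ∈ 𝒜, a₂, ha₂ : a₂ ∈ ℬ, rfl⟩ := Submodule.mem_sup.mp (hsub hb)
  set a₁' := a₁ + (a₂.trace / n) • 1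
  set a := tracelessPart a₂
  have ha₁' : a₁' ∈ 𝒜 := add_mem ha₁ (𝒜.smul_mem 𝒜.one_mem _)
  have hdecomp : a₁ + a₂ = a₁' + a := by simp only [a₁', a, tracelessPart]; abel
  have hxa : x * a ∈ Subalgebra.toSubmodule 𝒜.toSubalgebra ⊔
      Subalgebra.toSubmodule ℬ.toSubalgebra := by
    have hxb : x * (a₁ + a₂) ∈ 𝒞 := mul_mem hx𝒞 hb
    have hxa₁' : x * a₁' ∈ 𝒜 := mul_mem hx𝒜 ha₁'
    rw [← add_sub_cancel_left (x * a₁') (x * a), ← mul_add, ← hdecomp]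
    exact sub_mem (hsub hxb) (Submodule.mem_sup_left hxa₁')
  have ha0 : a = 0 :=
    h.eq_zero_of_mul_eq_zero_s11 hx𝒜 hx (tracelessPart_mem ha₂) <|
      h.mul_eq_zero_of_mul_mem_sup hn hx𝒜 hx0 (tracelessPart_mem ha₂)
        (trace_tracelessPart hn a₂) hxa
  rwa [hdecomp, ha0, add_zero]

lemma mem_left_of_nonscalar_mem (h : QuasiOrth 𝒜 ℬ) {𝒞 : StarSubalgebra ℂ (Mat n)}
    (hsub : Subalgebra.toSubmodule 𝒞.toSubalgebra ≤
      Subalgebra.toSubmodule 𝒜.toSubalgebra ⊔ Subalgebra.toSubmodule ℬ.toSubalgebra)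
    {x : Mat n} (hx𝒞 : x ∈ 𝒞) (hx𝒜 : x ∈ 𝒜) (hx : ∀ c : ℂ, x ≠ c • 1)
    {b : Mat n} (hb : b ∈ 𝒞) : b ∈ 𝒜 := by
  have hn : (n : ℂ) ≠ 0 := by
    rintro hn
    obtain rfl : n = 0 := by exact_mod_cast hn
    exact hx 0 (Subsingleton.elim _ _)
  have hx₀ : tracelessPart x ≠ 0 := fun h0 => hx (x.trace / n) (sub_eq_zero.mp h0)
  exact h.mem_left_of_traceless_mem hn hsub (tracelessPart_mem hx𝒞) (tracelessPart_mem hx𝒜)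
    (trace_tracelessPart hn x) hx₀ hb

end QuasiOrth

/-- if `ℬ ⊆ 𝒜₁ + 𝒜₂` for quasi-orthogonal `𝒜₁, 𝒜₂`, then
`ℬ ⊆ 𝒜₁`, or `ℬ ⊆ 𝒜₂`, or `ℬ ∩ 𝒜₁ = ℬ ∩ 𝒜₂ = ℂ·1`. -/
theorem stmt11 {n : ℕ} (𝒜₁ 𝒜₂ ℬ : StarSubalgebra ℂ (Mat n))
    (h : QuasiOrth 𝒜₁ 𝒜₂)
    (hsub : Subalgebra.toSubmodule ℬ.toSubalgebra ≤
      Subalgebra.toSubmodule 𝒜₁.toSubalgebra ⊔ Subalgebra.toSubmodule 𝒜₂.toSubalgebra) :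
    (∀ b ∈ ℬ, b ∈ 𝒜₁) ∨ (∀ b ∈ ℬ, b ∈ 𝒜₂) ∨
    ((∀ x, x ∈ ℬ → x ∈ 𝒜₁ → ∃ c : ℂ, x = c • (1 : Mat n)) ∧
     (∀ x, x ∈ ℬ → x ∈ 𝒜₂ → ∃ c : ℂ, x = c • (1 : Mat n))) := by
  by_cases h₁ : ∃ x ∈ ℬ, x ∈ 𝒜₁ ∧ ∀ c : ℂ, x ≠ c • 1
  · obtain ⟨x, hxℬ, hx𝒜, hx⟩ := h₁
    exact Or.inl fun b hb => h.mem_left_of_nonscalar_mem hsub hxℬ hx𝒜 hx hb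
  by_cases h₂ : ∃ x ∈ ℬ, x ∈ 𝒜₂ ∧ ∀ c : ℂ, x ≠ c • 1
  · obtain ⟨x, hxℬ, hx𝒜, hx⟩ := h₂
    exact Or.inr <| Or.inl fun b hb =>
      h.symm.mem_left_of_nonscalar_mem (hsub.trans_eq (sup_comm _ _)) hxℬ hx𝒜 hx hb
  push Not at h₁ h₂
  exact Or.inr <| Or.inr ⟨h₁, h₂⟩
end
end

section
/- For unital *-subalgebras 𝒜, ℬ of M_n(ℂ), define c(𝒜,ℬ) := Tr(E_𝒜 E_ℬ), the trace of the composition of the Hilbert–Schmidt orthogonal projections onto 𝒜 and ℬ (viewed as linear maps M_n(ℂ) → M_n(ℂ)). Then 1 ≤ c(𝒜,ℬ) ≤ min{dim 𝒜, dim ℬ}, and c(𝒜,ℬ) = 1 if and only if 𝒜 and ℬ are quasi-orthogonal. -/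
open Matrix BigOperators

noncomputable section

/-- `E` is the orthogonal projection of `M_n(ℂ)` (with the Hilbert–Schmidt inner
product `⟨X, Y⟩ = Tr(X*Y)`) onto the subspace `S`. -/
def IsHSProj {n : ℕ} (S : Submodule ℂ (Mat n)) (E : Mat n →ₗ[ℂ] Mat n) : Prop :=
  (∀ X, E X ∈ S) ∧ (∀ X ∈ S, E X = X) ∧
    (∀ X Y, (star (E X) * Y).trace = (star X * E Y).trace)

/-!
Write `E₀` for the Hilbert–Schmidt projection onto `ℂ·1`. Since `1 ∈ 𝒜` and `E_𝒜` preserves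
the trace, `E_𝒜 E₀ = E₀ = E₀ E_𝒜`, and likewise for `ℬ`; hence
`E_𝒜 E_ℬ = E₀ + (E_𝒜 - E₀)(E_ℬ - E₀)`, where both factors are again self-adjoint idempotents.
For self-adjoint idempotents `E, F` one has `Tr(E F) = Tr(E F E) = ∑ₚ ‖F E eₚ‖²` over the matrix
units `eₚ`: a nonnegative real, zero iff `F E = 0`, and at most `∑ₚ ‖E eₚ‖² = Tr E = rank E`.
So `c(𝒜,ℬ) = 1 + Tr((E_𝒜 - E₀)(E_ℬ - E₀)) ≥ 1`, with equality iff `E_ℬ E_𝒜 = E₀`. That is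
quasi-orthogonality: `Tr(A B) = ⟨E_ℬ E_𝒜 A*, B⟩` for `A ∈ 𝒜`, `B ∈ ℬ`; conversely a traceless
`A ∈ 𝒜` has `‖E_ℬ A‖² = Tr(A* E_ℬ A) = 0`.
Inequalities between traces are taken in `ℂ` with its partial order, where `0 ≤ z` means that
`z` is a nonnegative real.
-/

open scoped ComplexOrder

variable {ι : Type*} [Fintype ι]

namespace Matrix

lemma trace_star_mul_self_nonneg (X : Matrix ι ι ℂ) : 0 ≤ (star X * X).trace :=
  (posSemidef_conjTranspose_mul_self X).trace_nonneg

lemma trace_star_single_mul [DecidableEq ι] (i j : ι) (Y : Matrix ι ι ℂ) :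
    (star (single i j (1 : ℂ)) * Y).trace = Y i j := by
  rw [star_eq_conjTranspose, conjTranspose_single, star_one, trace_single_mul, one_smul]

end Matrix

lemma LinearMap.trace_eq_sum_trace_star_single [DecidableEq ι]
    (f : Matrix ι ι ℂ →ₗ[ℂ] Matrix ι ι ℂ) :
    LinearMap.trace ℂ _ f =
      ∑ p : ι × ι, (star (Matrix.single p.1 p.2 (1 : ℂ)) * f (Matrix.single p.1 p.2 1)).trace := by
  rw [LinearMap.trace_eq_matrix_trace ℂ (stdBasis ℂ ι ι) f, Matrix.trace]
  refine Fintype.sum_congr _ _ fun ⟨i, j⟩ => ?_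
  rw [Matrix.diag, LinearMap.toMatrix_apply, stdBasis_eq_single, trace_star_single_mul]
  simp [stdBasis]

def IsHSSelfAdjoint (E : Matrix ι ι ℂ →ₗ[ℂ] Matrix ι ι ℂ) : Prop :=
  ∀ X Y, (star (E X) * Y).trace = (star X * E Y).trace

namespace IsHSSelfAdjoint

variable {E F : Matrix ι ι ℂ →ₗ[ℂ] Matrix ι ι ℂ}

lemma sub (hE : IsHSSelfAdjoint E) (hF : IsHSSelfAdjoint F) : IsHSSelfAdjoint (E - F) := by
  intro X Y
  simp only [LinearMap.sub_apply, star_sub, sub_mul, mul_sub, trace_sub, hE X Y, hF X Y]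

lemma trace_star_apply_mul_apply (hE : IsHSSelfAdjoint E) (hE₂ : IsIdempotentElem E)
    (X : Matrix ι ι ℂ) : (star (E X) * E X).trace = (star X * E X).trace := by
  rw [hE, ← LinearMap.comp_apply, ← Module.End.mul_eq_comp, hE₂.eq]

lemma trace_star_apply_mul_apply_le (hE : IsHSSelfAdjoint E) (hE₂ : IsIdempotentElem E)
    (X : Matrix ι ι ℂ) : (star (E X) * E X).trace ≤ (star X * X).trace := by
  have hPythagoras : (star (X - E X) * (X - E X)).trace
      = (star X * X).trace - (star (E X) * E X).trace := by
    simp only [star_sub, sub_mul, mul_sub, trace_sub, hE X X, hE.trace_star_apply_mul_apply hE₂]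
    ring
  have := trace_star_mul_self_nonneg (X - E X)
  rwa [hPythagoras, sub_nonneg] at this

variable [DecidableEq ι]

lemma trace_eq_sum (hE : IsHSSelfAdjoint E) (hE₂ : IsIdempotentElem E) :
    LinearMap.trace ℂ _ E =
      ∑ p : ι × ι, (star (E (single p.1 p.2 1)) * E (single p.1 p.2 1)).trace := by
  rw [LinearMap.trace_eq_sum_trace_star_single]
  exact Fintype.sum_congr _ _ fun p => (hE.trace_star_apply_mul_apply hE₂ _).symm

lemma trace_comp_eq_sum (hE : IsHSSelfAdjoint E) (hE₂ : IsIdempotentElem E)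
    (hF : IsHSSelfAdjoint F) (hF₂ : IsIdempotentElem F) :
    LinearMap.trace ℂ _ (E ∘ₗ F) =
      ∑ p : ι × ι, (star (F (E (single p.1 p.2 1))) * F (E (single p.1 p.2 1))).trace := by
  have hcyclic : LinearMap.trace ℂ _ (E * F) = LinearMap.trace ℂ _ (E * (F * E)) := by
    rw [← hE₂.eq, mul_assoc, LinearMap.trace_mul_comm, mul_assoc, hE₂.eq]
  rw [← Module.End.mul_eq_comp, hcyclic, LinearMap.trace_eq_sum_trace_star_single]
  refine Fintype.sum_congr _ _ fun p => ?_
  rw [Module.End.mul_apply, ← hE, Module.End.mul_apply, hF.trace_star_apply_mul_apply hF₂]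

lemma trace_comp_nonneg (hE : IsHSSelfAdjoint E) (hE₂ : IsIdempotentElem E)
    (hF : IsHSSelfAdjoint F) (hF₂ : IsIdempotentElem F) :
    0 ≤ LinearMap.trace ℂ _ (E ∘ₗ F) := by
  rw [hE.trace_comp_eq_sum hE₂ hF hF₂]
  exact Finset.sum_nonneg fun p _ => trace_star_mul_self_nonneg _

lemma trace_comp_eq_zero_iff (hE : IsHSSelfAdjoint E) (hE₂ : IsIdempotentElem E)
    (hF : IsHSSelfAdjoint F) (hF₂ : IsIdempotentElem F) :
    LinearMap.trace ℂ _ (E ∘ₗ F) = 0 ↔ F ∘ₗ E = 0 := by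
  rw [hE.trace_comp_eq_sum hE₂ hF hF₂,
    Finset.sum_eq_zero_iff_of_nonneg fun p _ => trace_star_mul_self_nonneg _]
  simp only [Finset.mem_univ, true_implies, star_eq_conjTranspose,
    trace_conjTranspose_mul_self_eq_zero_iff]
  refine ⟨fun h => (stdBasis ℂ ι ι).ext fun ⟨i, j⟩ => ?_, fun h p => LinearMap.congr_fun h _⟩
  simpa [stdBasis_eq_single] using h (i, j)

lemma trace_comp_le_trace_left (hE : IsHSSelfAdjoint E) (hE₂ : IsIdempotentElem E)
    (hF : IsHSSelfAdjoint F) (hF₂ : IsIdempotentElem F) :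
    LinearMap.trace ℂ _ (E ∘ₗ F) ≤ LinearMap.trace ℂ _ E := by
  rw [hE.trace_comp_eq_sum hE₂ hF hF₂, hE.trace_eq_sum hE₂]
  exact Finset.sum_le_sum fun p _ => hF.trace_star_apply_mul_apply_le hF₂ _

end IsHSSelfAdjoint

section traceProj

variable (ι) [DecidableEq ι]

/-- `E₀ X = τ(X) • 1`, the Hilbert–Schmidt projection onto `ℂ·1`. -/
def traceProj : Matrix ι ι ℂ →ₗ[ℂ] Matrix ι ι ℂ :=
  (Fintype.card ι : ℂ)⁻¹ • (traceLinearMap ι ℂ ℂ).smulRight 1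

variable {ι}

lemma traceProj_apply (X : Matrix ι ι ℂ) :
    traceProj ι X = ((Fintype.card ι : ℂ)⁻¹ * X.trace) • 1 := by
  simp [traceProj, smul_smul]

lemma traceProj_apply_mem {S : Submodule ℂ (Matrix ι ι ℂ)} (h1 : 1 ∈ S) (X : Matrix ι ι ℂ) :
    traceProj ι X ∈ S := by
  rw [traceProj_apply]
  exact S.smul_mem _ h1

lemma star_traceProj_apply (X : Matrix ι ι ℂ) :
    star (traceProj ι X) = traceProj ι (star X) := by
  simp [traceProj_apply, star_eq_conjTranspose]

lemma trace_traceProj_apply_mul (X Y : Matrix ι ι ℂ) :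
    (traceProj ι X * Y).trace = (Fintype.card ι : ℂ)⁻¹ * X.trace * Y.trace := by
  simp [traceProj_apply, trace_smul]

lemma isHSSelfAdjoint_traceProj : IsHSSelfAdjoint (traceProj ι) := fun X Y => by
  rw [star_traceProj_apply, trace_traceProj_apply_mul, trace_mul_comm, trace_traceProj_apply_mul]
  ring

variable [Nonempty ι]

lemma trace_traceProj_apply (X : Matrix ι ι ℂ) : (traceProj ι X).trace = X.trace := by
  simp [traceProj_apply, trace_smul, mul_right_comm _ X.trace]

lemma trace_traceProj : LinearMap.trace ℂ _ (traceProj ι) = 1 := by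
  simp [traceProj]

lemma isIdempotentElem_traceProj : IsIdempotentElem (traceProj ι) :=
  LinearMap.ext fun X => by
    rw [Module.End.mul_apply, traceProj_apply (traceProj ι X), trace_traceProj_apply,
      ← traceProj_apply]

end traceProj

namespace IsHSProj

variable {n : ℕ} {S T : Submodule ℂ (Mat n)} {E F : Mat n →ₗ[ℂ] Mat n}

lemma apply_mem (hE : IsHSProj S E) (X : Mat n) : E X ∈ S := hE.1 X

lemma apply_of_mem (hE : IsHSProj S E) {X : Mat n} (hX : X ∈ S) : E X = X := hE.2.1 X hX

lemma isHSSelfAdjoint (hE : IsHSProj S E) : IsHSSelfAdjoint E := hE.2.2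

lemma isIdempotentElem (hE : IsHSProj S E) : IsIdempotentElem E :=
  LinearMap.ext fun X => hE.apply_of_mem (hE.apply_mem X)

lemma trace_eq_finrank (hE : IsHSProj S E) : LinearMap.trace ℂ _ E = Module.finrank ℂ S :=
  LinearMap.IsProj.trace ⟨hE.apply_mem, fun _ => hE.apply_of_mem⟩

lemma trace_comp_le_finrank_left (hE : IsHSProj S E) (hF : IsHSProj T F) :
    LinearMap.trace ℂ _ (E ∘ₗ F) ≤ Module.finrank ℂ S :=
  (hE.isHSSelfAdjoint.trace_comp_le_trace_left hE.isIdempotentElem hF.isHSSelfAdjoint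
    hF.isIdempotentElem).trans_eq hE.trace_eq_finrank

lemma trace_comp_le_finrank_right (hE : IsHSProj S E) (hF : IsHSProj T F) :
    LinearMap.trace ℂ _ (E ∘ₗ F) ≤ Module.finrank ℂ T := by
  rw [LinearMap.trace_comp_comm']
  exact hF.trace_comp_le_finrank_left hE

lemma trace_apply (hE : IsHSProj S E) (h1 : 1 ∈ S) (X : Mat n) : (E X).trace = X.trace := by
  simpa [hE.apply_of_mem h1] using (hE.isHSSelfAdjoint 1 X).symm

lemma comp_traceProj (hE : IsHSProj S E) (h1 : 1 ∈ S) :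
    E ∘ₗ traceProj (Fin n) = traceProj (Fin n) :=
  LinearMap.ext fun X => hE.apply_of_mem (traceProj_apply_mem h1 X)

lemma traceProj_comp (hE : IsHSProj S E) (h1 : 1 ∈ S) :
    traceProj (Fin n) ∘ₗ E = traceProj (Fin n) :=
  LinearMap.ext fun X => by
    rw [LinearMap.comp_apply, traceProj_apply, hE.trace_apply h1, traceProj_apply]

lemma isHSSelfAdjoint_sub_traceProj (hE : IsHSProj S E) :
    IsHSSelfAdjoint (E - traceProj (Fin n)) :=
  hE.isHSSelfAdjoint.sub isHSSelfAdjoint_traceProj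

variable [NeZero n]

lemma isIdempotentElem_sub_traceProj (hE : IsHSProj S E) (h1 : 1 ∈ S) :
    IsIdempotentElem (E - traceProj (Fin n)) := by
  have hEP : E * traceProj (Fin n) = traceProj (Fin n) := hE.comp_traceProj h1
  have hPE : traceProj (Fin n) * E = traceProj (Fin n) := hE.traceProj_comp h1
  rw [IsIdempotentElem, sub_mul, mul_sub, mul_sub, hE.isIdempotentElem.eq, hEP, hPE,
    isIdempotentElem_traceProj.eq, sub_self, sub_zero]

lemma comp_eq_traceProj_add (hE : IsHSProj S E) (hF : IsHSProj T F) (hS : 1 ∈ S) (hT : 1 ∈ T) :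
    E ∘ₗ F = traceProj (Fin n) + (E - traceProj (Fin n)) ∘ₗ (F - traceProj (Fin n)) := by
  have hEP : E * traceProj (Fin n) = traceProj (Fin n) := hE.comp_traceProj hS
  have hPF : traceProj (Fin n) * F = traceProj (Fin n) := hF.traceProj_comp hT
  rw [← Module.End.mul_eq_comp, ← Module.End.mul_eq_comp, sub_mul, mul_sub, mul_sub, hEP, hPF,
    isIdempotentElem_traceProj.eq]
  abel

lemma trace_comp_eq_one_add (hE : IsHSProj S E) (hF : IsHSProj T F) (hS : 1 ∈ S) (hT : 1 ∈ T) :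
    LinearMap.trace ℂ _ (E ∘ₗ F) =
      1 + LinearMap.trace ℂ _ ((E - traceProj (Fin n)) ∘ₗ (F - traceProj (Fin n))) := by
  rw [hE.comp_eq_traceProj_add hF hS hT, map_add, trace_traceProj]

lemma one_le_trace_comp (hE : IsHSProj S E) (hF : IsHSProj T F) (hS : 1 ∈ S) (hT : 1 ∈ T) :
    1 ≤ LinearMap.trace ℂ _ (E ∘ₗ F) := by
  rw [hE.trace_comp_eq_one_add hF hS hT]
  exact le_add_of_nonneg_right <| hE.isHSSelfAdjoint_sub_traceProj.trace_comp_nonneg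
    (hE.isIdempotentElem_sub_traceProj hS) hF.isHSSelfAdjoint_sub_traceProj
    (hF.isIdempotentElem_sub_traceProj hT)

lemma trace_comp_eq_one_iff (hE : IsHSProj S E) (hF : IsHSProj T F) (hS : 1 ∈ S) (hT : 1 ∈ T) :
    LinearMap.trace ℂ _ (E ∘ₗ F) = 1 ↔ F ∘ₗ E = traceProj (Fin n) := by
  rw [hE.trace_comp_eq_one_add hF hS hT, add_eq_left,
    hE.isHSSelfAdjoint_sub_traceProj.trace_comp_eq_zero_iff
      (hE.isIdempotentElem_sub_traceProj hS) hF.isHSSelfAdjoint_sub_traceProj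
      (hF.isIdempotentElem_sub_traceProj hT),
    hF.comp_eq_traceProj_add hE hT hS, add_eq_left]

end IsHSProj

lemma quasiOrth_iff_comp_eq_traceProj {n : ℕ} [NeZero n] {𝒜 ℬ : StarSubalgebra ℂ (Mat n)}
    {EA EB : Mat n →ₗ[ℂ] Mat n}
    (hEA : IsHSProj (Subalgebra.toSubmodule 𝒜.toSubalgebra) EA)
    (hEB : IsHSProj (Subalgebra.toSubmodule ℬ.toSubalgebra) EB) :
    QuasiOrth 𝒜 ℬ ↔ EB ∘ₗ EA = traceProj (Fin n) := by
  have h1A : (1 : Mat n) ∈ Subalgebra.toSubmodule 𝒜.toSubalgebra := one_mem 𝒜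
  have h1B : (1 : Mat n) ∈ Subalgebra.toSubmodule ℬ.toSubalgebra := one_mem ℬ
  constructor
  · intro h
    refine LinearMap.ext fun X => ?_
    set A := EA X - traceProj (Fin n) X
    have hA : A ∈ 𝒜 := sub_mem (hEA.apply_mem X) (traceProj_apply_mem h1A X)
    have htrA : (star A).trace = 0 := by
      rw [star_eq_conjTranspose, trace_conjTranspose, trace_sub, hEA.trace_apply h1A,
        trace_traceProj_apply, sub_self, star_zero]
    have hEBA : (star (EB A) * EB A).trace = 0 := by
      rw [hEB.isHSSelfAdjoint.trace_star_apply_mul_apply hEB.isIdempotentElem]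
      have := h (star A) (star_mem hA) (EB A) (hEB.apply_mem A)
      rw [htrA, zero_mul] at this
      exact (mul_eq_zero.1 this).resolve_left (Nat.cast_ne_zero.2 (NeZero.ne n))
    rwa [star_eq_conjTranspose, trace_conjTranspose_mul_self_eq_zero_iff, map_sub,
      hEB.apply_of_mem (traceProj_apply_mem h1B X), sub_eq_zero] at hEBA
  · intro h A hA B hB
    have hAB : (A * B).trace = (traceProj (Fin n) A * B).trace :=
      calc (A * B).trace = (star (star A) * EB B).trace := by rw [star_star, hEB.apply_of_mem hB]
        _ = (star (EB (EA (star A))) * B).trace := by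
          rw [← hEB.isHSSelfAdjoint, hEA.apply_of_mem (star_mem hA : star A ∈ 𝒜)]
        _ = (traceProj (Fin n) A * B).trace := by
          rw [← LinearMap.comp_apply, h, star_traceProj_apply, star_star]
    rw [hAB, trace_traceProj_apply_mul, Fintype.card_fin, mul_assoc,
      mul_inv_cancel_left₀ (Nat.cast_ne_zero.2 (NeZero.ne n))]

/-- `c(𝒜,ℬ) := Tr(E_𝒜 E_ℬ)` is a real number with
`1 ≤ c(𝒜,ℬ) ≤ min(dim 𝒜, dim ℬ)`, and `c(𝒜,ℬ) = 1` iff `𝒜 ⊥ ℬ`. -/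
theorem stmt15 {n : ℕ} (hn : 0 < n) (𝒜 ℬ : StarSubalgebra ℂ (Mat n))
    (EA EB : Mat n →ₗ[ℂ] Mat n)
    (hEA : IsHSProj (Subalgebra.toSubmodule 𝒜.toSubalgebra) EA)
    (hEB : IsHSProj (Subalgebra.toSubmodule ℬ.toSubalgebra) EB) :
    (LinearMap.trace ℂ (Mat n) (EA ∘ₗ EB)).im = 0 ∧
    1 ≤ (LinearMap.trace ℂ (Mat n) (EA ∘ₗ EB)).re ∧
    (LinearMap.trace ℂ (Mat n) (EA ∘ₗ EB)).re ≤
      ((min (Module.finrank ℂ 𝒜) (Module.finrank ℂ ℬ) : ℕ) : ℝ) ∧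
    (LinearMap.trace ℂ (Mat n) (EA ∘ₗ EB) = 1 ↔ QuasiOrth 𝒜 ℬ) := by
  have : NeZero n := ⟨hn.ne'⟩
  have h1A : (1 : Mat n) ∈ Subalgebra.toSubmodule 𝒜.toSubalgebra := one_mem 𝒜
  have h1B : (1 : Mat n) ∈ Subalgebra.toSubmodule ℬ.toSubalgebra := one_mem ℬ
  obtain ⟨hre, him⟩ := Complex.le_def.1 (hEA.one_le_trace_comp hEB h1A h1B)
  have hleA := (Complex.le_def.1 (hEA.trace_comp_le_finrank_left hEB)).1
  have hleB := (Complex.le_def.1 (hEA.trace_comp_le_finrank_right hEB)).1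
  refine ⟨him.symm, hre, ?_, ?_⟩
  · rw [Nat.cast_min]
    exact le_min hleA hleB
  · rw [hEA.trace_comp_eq_one_iff hEB h1A h1B, quasiOrth_iff_comp_eq_traceProj hEA hEB]
end
end

section
/- If P and Q are orthogonal projections on a finite-dimensional Hilbert space, onto subspaces N and K respectively, then dim(N ∩ K) ≤ Tr(PQ) ≤ min{dim N, dim K}, and Tr(PQ) = dim(N ∩ K) if and only if N ∩ (N∩K)^⊥ and K ∩ (N∩K)^⊥ are orthogonal subspaces. -/
/-!
Put `M = N ⊓ K` and `K' = K ⊓ Mᗮ`. As `K` is the orthogonal sum of `M ≤ N` and `K'`, we have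
`Q = P_M + P_K'` and `Tr(P P_M) = dim M`, so `Tr(PQ) = dim(N ⊓ K) + Tr(P P_K')`. Computed in an
orthonormal basis `(e_i)` of `L`, the trace `Tr(P P_L)` is `∑ ‖P e_i‖²`: a nonnegative real, at
most `dim L`, and zero exactly when `L ⟂ N`. Since `N = M ⊕ (N ⊓ Mᗮ)` and `K' ⟂ M`, for `L = K'`
this last condition says that `N ⊓ Mᗮ ⟂ K'`. The bound by `dim N` follows from `Tr(PQ) = Tr(QP)`.
-/

open scoped InnerProductSpace ComplexOrder

namespace Submodule

variable {𝕜 E : Type*} [RCLike 𝕜] [NormedAddCommGroup E] [InnerProductSpace 𝕜 E]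

theorem starProjection_sup_of_isOrtho {U W : Submodule 𝕜 E} [U.HasOrthogonalProjection]
    [W.HasOrthogonalProjection] [(U ⊔ W).HasOrthogonalProjection] (h : U ⟂ W) :
    (U ⊔ W).starProjection = U.starProjection + W.starProjection := by
  ext v
  refine eq_starProjection_of_mem_orthogonal' (z := v - U.starProjection v - W.starProjection v)
    (add_mem (mem_sup_left (starProjection_apply_mem U v))
      (mem_sup_right (starProjection_apply_mem W v))) ?_ (by rw [add_apply]; abel)
  rw [← inf_orthogonal]
  refine ⟨sub_mem (sub_starProjection_mem_orthogonal v) ?_, ?_⟩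
  · exact isOrtho_iff_le.mp h.symm (starProjection_apply_mem W v)
  · rw [sub_right_comm]
    exact sub_mem (sub_starProjection_mem_orthogonal v)
      (isOrtho_iff_le.mp h (starProjection_apply_mem U v))

theorem starProjection_eq_add_starProjection_inf_orthogonal {U V : Submodule 𝕜 E}
    [U.HasOrthogonalProjection] [V.HasOrthogonalProjection] [(V ⊓ Uᗮ).HasOrthogonalProjection]
    (h : U ≤ V) : V.starProjection = U.starProjection + (V ⊓ Uᗮ).starProjection := by
  have hsup : U ⊔ V ⊓ Uᗮ = V := by
    rw [inf_comm]; exact sup_orthogonal_inf_of_hasOrthogonalProjection h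
  have : (U ⊔ V ⊓ Uᗮ).HasOrthogonalProjection := by rw [hsup]; infer_instance
  calc V.starProjection = (U ⊔ V ⊓ Uᗮ).starProjection := by congr!; exact hsup.symm
    _ = _ := starProjection_sup_of_isOrtho (isOrtho_iff_le.mpr inf_le_right).symm

theorem isOrtho_iff_inf_orthogonal_isOrtho {M N W : Submodule 𝕜 E} [M.HasOrthogonalProjection]
    (hMN : M ≤ N) (hMW : M ⟂ W) : N ⟂ W ↔ N ⊓ Mᗮ ⟂ W := by
  conv_lhs => rw [← sup_orthogonal_inf_of_hasOrthogonalProjection hMN]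
  rw [isOrtho_sup_left, inf_comm]
  exact and_iff_right hMW

end Submodule

namespace LinearMap

variable {𝕜 E ι : Type*} [RCLike 𝕜] [NormedAddCommGroup E] [InnerProductSpace 𝕜 E]
  [FiniteDimensional 𝕜 E] [Fintype ι]

theorem trace_comp_starProjection (T : E →ₗ[𝕜] E) (K : Submodule 𝕜 E)
    (b : OrthonormalBasis ι 𝕜 K) :
    trace 𝕜 E (T ∘ₗ K.starProjection.toLinearMap) = ∑ i, ⟪(b i : E), T (b i)⟫_𝕜 := by
  change trace 𝕜 E ((T ∘ₗ K.subtype) ∘ₗ K.orthogonalProjectionOnto.toLinearMap) = _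
  rw [trace_comp_comm', trace_eq_sum_inner _ b]
  refine Fintype.sum_congr _ _ fun i => ?_
  simp only [Submodule.coe_inner, comp_apply, Submodule.coe_subtype, ContinuousLinearMap.coe_coe,
    Submodule.coe_orthogonalProjectionOnto_apply]
  rw [← Submodule.inner_starProjection_left_eq_right, K.starProjection_eq_self_iff.mpr (b i).2]

theorem trace_starProjection_comp_starProjection (N K : Submodule 𝕜 E)
    (b : OrthonormalBasis ι 𝕜 K) :
    trace 𝕜 E (N.starProjection ∘L K.starProjection) =
      ((∑ i, ‖N.starProjection (b i)‖ ^ 2 : ℝ) : 𝕜) := by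
  rw [ContinuousLinearMap.toLinearMap_comp, trace_comp_starProjection _ K b]
  push_cast
  refine Fintype.sum_congr _ _ fun i => ?_
  rw [← inner_self_eq_norm_sq_to_K, N.inner_starProjection_left_eq_right,
    N.starProjection_eq_self_iff.mpr (N.starProjection_apply_mem _)]

theorem trace_starProjection_comp_starProjection_comm (N K : Submodule 𝕜 E) :
    trace 𝕜 E (N.starProjection ∘L K.starProjection) =
      trace 𝕜 E (K.starProjection ∘L N.starProjection) := by
  rw [ContinuousLinearMap.toLinearMap_comp, trace_comp_comm',
    ← ContinuousLinearMap.toLinearMap_comp]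

theorem trace_starProjection_comp_starProjection_nonneg (N K : Submodule 𝕜 E) :
    0 ≤ trace 𝕜 E (N.starProjection ∘L K.starProjection) := by
  rw [trace_starProjection_comp_starProjection N K (stdOrthonormalBasis 𝕜 K),
    RCLike.ofReal_nonneg]
  positivity

theorem re_trace_starProjection_comp_starProjection_le_finrank (N K : Submodule 𝕜 E) :
    RCLike.re (trace 𝕜 E (N.starProjection ∘L K.starProjection)) ≤ Module.finrank 𝕜 K := by
  let b := stdOrthonormalBasis 𝕜 K
  rw [trace_starProjection_comp_starProjection N K b, RCLike.ofReal_re]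
  calc ∑ i, ‖N.starProjection (b i)‖ ^ 2 ≤ ∑ i, ‖(b i : E)‖ ^ 2 := by
        gcongr; exact N.norm_starProjection_apply_le _
    _ = Module.finrank 𝕜 K := by simp [Submodule.norm_coe, b.norm_eq_one]

theorem trace_starProjection_comp_starProjection_of_le {N K : Submodule 𝕜 E} (h : K ≤ N) :
    trace 𝕜 E (N.starProjection ∘L K.starProjection) = Module.finrank 𝕜 K := by
  let b := stdOrthonormalBasis 𝕜 K
  rw [trace_starProjection_comp_starProjection N K b]
  simp [N.starProjection_eq_self_iff.mpr (h (b _).2), Submodule.norm_coe, b.norm_eq_one]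

theorem trace_starProjection_comp_starProjection_eq_zero_iff (N K : Submodule 𝕜 E) :
    trace 𝕜 E (N.starProjection ∘L K.starProjection) = 0 ↔ N ⟂ K := by
  let b := stdOrthonormalBasis 𝕜 K
  have hspan : Submodule.span 𝕜 (Set.range (Subtype.val ∘ b)) = K := by
    simpa [Submodule.map_span, ← Set.range_comp] using
      congrArg (Submodule.map K.subtype) b.toBasis.span_eq
  rw [trace_starProjection_comp_starProjection N K b, RCLike.ofReal_eq_zero,
    Finset.sum_eq_zero_iff_of_nonneg fun i _ => by positivity, Submodule.isOrtho_comm,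
    Submodule.isOrtho_iff_le]
  conv_rhs => rw [← hspan, Submodule.span_le, Set.range_subset_iff]
  simp [Submodule.starProjection_apply_eq_zero_iff]

end LinearMap

/-- for orthogonal projections `P`, `Q` onto subspaces `N`, `K`
of a finite-dimensional (complex) Hilbert space,
`dim(N ∩ K) ≤ Tr(PQ) ≤ min(dim N, dim K)`, with `Tr(PQ) = dim(N ∩ K)` iff
`N ∩ (N ∩ K)^⊥` and `K ∩ (N ∩ K)^⊥` are orthogonal. -/
theorem stmt16 {E : Type*} [NormedAddCommGroup E] [InnerProductSpace ℂ E]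
    [FiniteDimensional ℂ E] (N K : Submodule ℂ E) :
    (LinearMap.trace ℂ E
      ((N.subtype ∘ₗ N.orthogonalProjectionOnto.toLinearMap) ∘ₗ
        (K.subtype ∘ₗ K.orthogonalProjectionOnto.toLinearMap))).im = 0 ∧
    ((Module.finrank ℂ (N ⊓ K : Submodule ℂ E) : ℝ) ≤
      (LinearMap.trace ℂ E
        ((N.subtype ∘ₗ N.orthogonalProjectionOnto.toLinearMap) ∘ₗ
          (K.subtype ∘ₗ K.orthogonalProjectionOnto.toLinearMap))).re) ∧
    ((LinearMap.trace ℂ E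
        ((N.subtype ∘ₗ N.orthogonalProjectionOnto.toLinearMap) ∘ₗ
          (K.subtype ∘ₗ K.orthogonalProjectionOnto.toLinearMap))).re ≤
      ((min (Module.finrank ℂ N) (Module.finrank ℂ K) : ℕ) : ℝ)) ∧
    ((LinearMap.trace ℂ E
        ((N.subtype ∘ₗ N.orthogonalProjectionOnto.toLinearMap) ∘ₗ
          (K.subtype ∘ₗ K.orthogonalProjectionOnto.toLinearMap)) =
        (Module.finrank ℂ (N ⊓ K : Submodule ℂ E) : ℂ)) ↔
      (∀ x ∈ N ⊓ (N ⊓ K)ᗮ, ∀ y ∈ K ⊓ (N ⊓ K)ᗮ, (inner ℂ x y : ℂ) = 0)) := by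
  have hPQ : (N.subtype ∘ₗ N.orthogonalProjectionOnto.toLinearMap) ∘ₗ
      (K.subtype ∘ₗ K.orthogonalProjectionOnto.toLinearMap) =
      (N.starProjection ∘L K.starProjection).toLinearMap := rfl
  rw [hPQ]
  set M := N ⊓ K
  set K' := K ⊓ Mᗮ
  have hsplit : LinearMap.trace ℂ E (N.starProjection ∘L K.starProjection) =
      Module.finrank ℂ M + LinearMap.trace ℂ E (N.starProjection ∘L K'.starProjection) := by
    rw [Submodule.starProjection_eq_add_starProjection_inf_orthogonal (inf_le_right : M ≤ K),
      ContinuousLinearMap.comp_add, ContinuousLinearMap.toLinearMap_add, map_add,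
      LinearMap.trace_starProjection_comp_starProjection_of_le inf_le_left]
  obtain ⟨hre, him⟩ :=
    RCLike.nonneg_iff.mp (LinearMap.trace_starProjection_comp_starProjection_nonneg N K')
  refine ⟨?_, ?_, ?_, ?_⟩
  · rw [hsplit]; simpa using him
  · rw [hsplit]; simpa using hre
  · rw [Nat.cast_min]
    refine le_min ?_ (LinearMap.re_trace_starProjection_comp_starProjection_le_finrank N K)
    rw [LinearMap.trace_starProjection_comp_starProjection_comm]
    exact LinearMap.re_trace_starProjection_comp_starProjection_le_finrank K N
  · rw [hsplit, add_eq_left, LinearMap.trace_starProjection_comp_starProjection_eq_zero_iff,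
      Submodule.isOrtho_iff_inf_orthogonal_isOrtho inf_le_left
        (Submodule.isOrtho_iff_le.mpr inf_le_right).symm,
      Submodule.isOrtho_iff_inner_eq]
end

section
/- If 𝒜 ⊆ M_n(ℂ) is a homogeneously balanced unital *-subalgebra and A_1,…,A_N is a Hilbert–Schmidt orthonormal basis of 𝒜, then the trace-preserving conditional expectation onto the commutant 𝒜' is given by E_{𝒜'}(X) = (n/N) Σ_{j=1}^N A_j X A_j* for all X ∈ M_n(ℂ). -/
open Matrix BigOperators

noncomputable section

/-- A unital *-subalgebra `𝒜 ⊆ M_n(ℂ)` is homogeneously balanced if, up to a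
unitary conjugation and a reindexing, it is `⊕ₖ (M_{p k}(ℂ) ⊗ 1_{q k})` with the
ratio `p k / q k` independent of `k`. -/
def IsHomBalanced {n : ℕ} (𝒜 : StarSubalgebra ℂ (Mat n)) : Prop :=
  ∃ (ι : Type) (_ : Fintype ι) (_ : DecidableEq ι) (p q : ι → ℕ)
    (e : (Σ k : ι, Fin (p k) × Fin (q k)) ≃ Fin n) (U : Mat n),
      U * star U = 1 ∧ star U * U = 1 ∧
      (∀ k, 0 < p k ∧ 0 < q k) ∧
      (∀ k l, p k * q l = p l * q k) ∧
      (∀ X : Mat n, X ∈ 𝒜 ↔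
        ∃ A : ∀ k, Matrix (Fin (p k)) (Fin (p k)) ℂ,
          X = U * (Matrix.reindex e e (Matrix.blockDiagonal'
            (fun k => Matrix.kroneckerMap (· * ·) (A k)
              (1 : Matrix (Fin (q k)) (Fin (q k)) ℂ)))) * star U)

/-!
Write `Φ(X) = ∑ⱼ Aⱼ X Aⱼ*` (`krausMap A X`). Expanding one Hilbert–Schmidt orthonormal basis of
`𝒜` in another shows that `Φ` does not depend on the basis, and expanding `B Aⱼ` and `Aⱼ* B` in
the basis shows that `Φ(X)` commutes with every `B ∈ 𝒜`. For the basis of rescaled matrix units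
`q_k^{-1/2} E_ab` of the blocks, `Φ(1) = ⊕ₖ (p_k / q_k) 1`, a scalar `c • 1` precisely because
`𝒜` is homogeneously balanced; as `(Aⱼ*)ⱼ` is again an orthonormal basis of `𝒜`, also
`∑ⱼ Aⱼ* Aⱼ = c • 1`, and taking traces gives `c = N / n`. Hence for `M ∈ 𝒜'`,
`Tr(Φ(X)* M) = Tr((∑ⱼ Aⱼ* Aⱼ) X* M) = (N / n) Tr(X* M)`, so `(n / N) Φ(X)` lies in `𝒜'` and has
the same Hilbert–Schmidt pairings with `𝒜'` as `X`: it is the orthogonal projection of `X`.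
-/

open Kronecker

lemma Submodule.star_mem_span_range_star {R ι M : Type*} [CommSemiring R] [StarRing R]
    [Fintype ι] [AddCommMonoid M] [Module R M] [StarAddMonoid M] [StarModule R M] {v : ι → M}
    {x : M} (hx : x ∈ Submodule.span R (Set.range v)) :
    star x ∈ Submodule.span R (Set.range fun j => star (v j)) := by
  obtain ⟨c, rfl⟩ := (Submodule.mem_span_range_iff_exists_fun R).mp hx
  simp only [star_sum, star_smul]
  exact Submodule.sum_mem _ fun j _ => Submodule.smul_mem _ _ (Submodule.subset_span ⟨j, rfl⟩)

lemma StarSubalgebra.mem_iff_mem_span_of_span_eq {R M ι : Type*} [CommSemiring R] [StarRing R]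
    [Semiring M] [Algebra R M] [StarRing M] [StarModule R M] {𝒜 : StarSubalgebra R M}
    {v : ι → M} (hsp : Submodule.span R (Set.range v) = Subalgebra.toSubmodule 𝒜.toSubalgebra)
    (x : M) : x ∈ 𝒜 ↔ x ∈ Submodule.span R (Set.range v) :=
  (SetLike.ext_iff.mp hsp x).symm

lemma Submodule.nonempty_of_one_mem_span {R M ι : Type*} [Semiring R] [Semiring M]
    [Nontrivial M] [Module R M] {v : ι → M} (h : 1 ∈ Submodule.span R (Set.range v)) :
    Nonempty ι := by
  by_contra hι
  rw [not_nonempty_iff] at hι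
  rw [Set.range_eq_empty, Submodule.span_empty, Submodule.mem_bot] at h
  exact one_ne_zero h

lemma Pi.single_finsetSum {ι κ : Type*} [DecidableEq ι] {M : ι → Type*}
    [∀ i, AddCommMonoid (M i)] (i : ι) (s : Finset κ) (f : κ → M i) :
    Pi.single i (∑ x ∈ s, f x) = ∑ x ∈ s, Pi.single i (f x) :=
  map_sum (AddMonoidHom.single M i) f s

lemma Nat.cast_div_eq_sum_div_sum {ι K : Type*} [Fintype ι] [Field K] [CharZero K] {p q : ι → ℕ}
    (hq : ∀ k, 0 < q k) (hpq : ∀ k l, p k * q l = p l * q k) (k : ι) :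
    (p k : K) / q k = (∑ l, (p l : K)) / ∑ l, (q l : K) := by
  have hsum : (∑ l, q l : K) ≠ 0 := by
    exact_mod_cast ((hq k).trans_le (Finset.single_le_sum (fun l _ => (q l).zero_le)
      (Finset.mem_univ k))).ne'
  rw [div_eq_div_iff (by exact_mod_cast (hq k).ne') hsum, Finset.mul_sum, Finset.sum_mul]
  exact_mod_cast Finset.sum_congr rfl fun l _ => hpq k l

lemma star_inv_sqrt_mul_inv_sqrt (x : ℕ) :
    star ((Real.sqrt x : ℂ))⁻¹ * ((Real.sqrt x : ℂ))⁻¹ = (x : ℂ)⁻¹ := by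
  rw [star_inv₀, Complex.star_def, Complex.conj_ofReal, ← mul_inv, ← Complex.ofReal_mul,
    Real.mul_self_sqrt (Nat.cast_nonneg x), Complex.ofReal_natCast]

namespace Matrix

lemma trace_submatrix_equiv {m l R : Type*} [Fintype m] [Fintype l] [AddCommMonoid R]
    (M : Matrix m m R) (e : l ≃ m) : (M.submatrix e e).trace = M.trace :=
  e.sum_comp fun i => M i i

lemma sum_single_mul_star_single {m : Type*} [Fintype m] [DecidableEq m] (w : ℂ) :
    ∑ ab : m × m, single ab.1 ab.2 w * star (single ab.1 ab.2 w)
      = ((Fintype.card m : ℂ) * (star w * w)) • 1 := by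
  have hw (a : m) : single a a (w * star w) = (star w * w) • single a a 1 := by
    rw [smul_single, smul_eq_mul, mul_one, mul_comm]
  simp only [star_eq_conjTranspose, conjTranspose_single, single_mul_single_same, hw,
    Fintype.sum_prod_type, Finset.sum_const, Finset.card_univ, ← Finset.smul_sum, sum_single_one,
    ← Nat.cast_smul_eq_nsmul ℂ, smul_smul]
  rw [mul_comm]

variable {m ι κ : Type*} [Fintype m]

lemma star_trace_star_mul (M N : Matrix m m ℂ) :
    star (star M * N).trace = (star N * M).trace := by
  rw [← trace_conjTranspose, ← star_eq_conjTranspose, star_mul, star_star]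

def HSOrthonormal [DecidableEq ι] (A : ι → Matrix m m ℂ) : Prop :=
  ∀ i j, (star (A i) * A j).trace = if i = j then 1 else 0

def krausMap [Fintype ι] (A : ι → Matrix m m ℂ) (X : Matrix m m ℂ) : Matrix m m ℂ :=
  ∑ j, A j * X * star (A j)

lemma trace_star_krausMap_mul [Fintype ι] {A : ι → Matrix m m ℂ} {M : Matrix m m ℂ}
    (hM : ∀ j, star (A j) * M = M * star (A j)) (X : Matrix m m ℂ) :
    (star (krausMap A X) * M).trace = ((∑ j, star (A j) * A j) * (star X * M)).trace := by
  simp only [krausMap, star_sum, star_mul, star_star, Finset.sum_mul, trace_sum]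
  refine Finset.sum_congr rfl fun j _ => ?_
  rw [Matrix.mul_assoc, Matrix.mul_assoc, hM, ← Matrix.mul_assoc, ← Matrix.mul_assoc,
    trace_mul_comm]
  simp only [Matrix.mul_assoc]

variable [DecidableEq ι] {A : ι → Matrix m m ℂ}

lemma HSOrthonormal.conjTranspose (hA : HSOrthonormal A) : HSOrthonormal fun j => (A j)ᴴ := by
  intro i j
  simp only [star_eq_conjTranspose, conjTranspose_conjTranspose]
  rw [trace_mul_comm, ← star_eq_conjTranspose, hA]
  simp only [eq_comm]

namespace HSOrthonormal

variable [Fintype ι] (hA : HSOrthonormal A)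
include hA

lemma eq_sum_of_mem_span {M : Matrix m m ℂ} (hM : M ∈ Submodule.span ℂ (Set.range A)) :
    M = ∑ j, (star (A j) * M).trace • A j := by
  obtain ⟨c, rfl⟩ := (Submodule.mem_span_range_iff_exists_fun ℂ).mp hM
  refine Finset.sum_congr rfl fun j _ => ?_
  simp [Finset.mul_sum, trace_sum, hA j]

lemma trace_sum_mul_star : (∑ j, A j * star (A j)).trace = Fintype.card ι := by
  simp [trace_sum, trace_mul_comm (A _), hA _ _]

lemma krausMap_eq_of_span_eq [Fintype κ] [DecidableEq κ] {B : κ → Matrix m m ℂ}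
    (hB : HSOrthonormal B)
    (hspan : Submodule.span ℂ (Set.range A) = Submodule.span ℂ (Set.range B))
    (X : Matrix m m ℂ) : krausMap A X = krausMap B X := by
  have hAB j := hB.eq_sum_of_mem_span (hspan ▸ Submodule.subset_span ⟨j, rfl⟩ : A j ∈ _)
  have hBA i := hA.eq_sum_of_mem_span (hspan ▸ Submodule.subset_span ⟨i, rfl⟩ : B i ∈ _)
  calc krausMap A X = ∑ j, ∑ i, (star (B i) * A j).trace • (B i * X * star (A j)) := by
        refine Finset.sum_congr rfl fun j _ => ?_
        nth_rw 1 [hAB j]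
        simp only [Finset.sum_mul, smul_mul_assoc]
    _ = ∑ i, B i * X * star (∑ j, (star (A j) * B i).trace • A j) := by
        rw [Finset.sum_comm]
        simp only [star_sum, star_smul, star_trace_star_mul, Finset.mul_sum, mul_smul_comm]
    _ = krausMap B X := by
        simp only [← hBA]
        rfl

lemma mul_krausMap_comm {B : Matrix m m ℂ}
    (hBA : ∀ j, B * A j ∈ Submodule.span ℂ (Set.range A))
    (hBA' : ∀ j, star B * A j ∈ Submodule.span ℂ (Set.range A)) (X : Matrix m m ℂ) :
    B * krausMap A X = krausMap A X * B := by
  have hleft j := hA.eq_sum_of_mem_span (hBA j)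
  have hright j : star (A j) * B = ∑ k, (star (A j) * (B * A k)).trace • star (A k) := by
    have := congrArg star (hA.eq_sum_of_mem_span (hBA' j))
    simp only [star_sum, star_smul, star_trace_star_mul, star_mul, star_star] at this
    simpa only [Matrix.mul_assoc] using this
  calc B * krausMap A X = ∑ j, B * A j * X * star (A j) := by
        simp only [krausMap, Finset.mul_sum, Matrix.mul_assoc]
    _ = ∑ j, ∑ k, (star (A k) * (B * A j)).trace • (A k * X * star (A j)) := by
        refine Finset.sum_congr rfl fun j _ => ?_
        conv_lhs => rw [hleft j]
        simp only [Finset.sum_mul, smul_mul_assoc]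
    _ = krausMap A X * B := by
        rw [Finset.sum_comm]
        simp only [krausMap, Finset.sum_mul, Matrix.mul_assoc, hright, Finset.mul_sum,
          mul_smul_comm]

variable [DecidableEq m] {𝒜 : StarSubalgebra ℂ (Matrix m m ℂ)}
  (hsp : Submodule.span ℂ (Set.range A) = Subalgebra.toSubmodule 𝒜.toSubalgebra)
include hsp

lemma krausMap_mem_centralizer (X : Matrix m m ℂ) :
    krausMap A X ∈ Subalgebra.centralizer ℂ (𝒜 : Set (Matrix m m ℂ)) := by
  have hmem (j) : A j ∈ 𝒜 :=
    (𝒜.mem_iff_mem_span_of_span_eq hsp _).mpr (Submodule.subset_span ⟨j, rfl⟩)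
  refine (Subalgebra.mem_centralizer_iff ℂ).mpr fun B hB => hA.mul_krausMap_comm ?_ ?_ X
  · exact fun j => (𝒜.mem_iff_mem_span_of_span_eq hsp _).mp (mul_mem hB (hmem j))
  · exact fun j => (𝒜.mem_iff_mem_span_of_span_eq hsp _).mp (mul_mem (star_mem hB) (hmem j))

lemma sum_star_mul_self_eq_sum_mul_star_self :
    ∑ j, star (A j) * A j = ∑ j, A j * star (A j) := by
  have hstar (j) : star (A j) ∈ Submodule.span ℂ (Set.range A) :=
    (𝒜.mem_iff_mem_span_of_span_eq hsp _).mp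
      (star_mem ((𝒜.mem_iff_mem_span_of_span_eq hsp _).mpr (Submodule.subset_span ⟨j, rfl⟩)))
  have hspan : Submodule.span ℂ (Set.range fun j => star (A j))
      = Submodule.span ℂ (Set.range A) := by
    refine le_antisymm (Submodule.span_le.mpr (Set.range_subset_iff.mpr hstar))
      (Submodule.span_le.mpr (Set.range_subset_iff.mpr fun j => ?_))
    simpa using Submodule.star_mem_span_range_star (hstar j)
  simpa [krausMap, star_eq_conjTranspose] using
    hA.conjTranspose.krausMap_eq_of_span_eq hA hspan 1

end HSOrthonormal

end Matrix

open scoped ComplexOrder in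
lemma IsHSProj.apply_eq_of_forall_trace {n : ℕ} {S : Submodule ℂ (Mat n)}
    {E : Mat n →ₗ[ℂ] Mat n} (hE : IsHSProj S E) {X P : Mat n} (hP : P ∈ S)
    (h : ∀ M ∈ S, (star P * M).trace = (star X * M).trace) : E X = P := by
  have hEX : ∀ M ∈ S, (star (E X) * M).trace = (star X * M).trace := fun M hM => by
    rw [hE.2.2, hE.2.1 M hM]
  have hD : E X - P ∈ S := S.sub_mem (hE.1 X) hP
  rw [← sub_eq_zero, ← trace_conjTranspose_mul_self_eq_zero_iff, ← star_eq_conjTranspose,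
    star_sub, Matrix.sub_mul, trace_sub, hEX _ hD, h _ hD, sub_self]

section BlockEmbedding

variable {ι : Type*} [DecidableEq ι] {p q : ι → ℕ} {n : ℕ}
  (e : (Σ k : ι, Fin (p k) × Fin (q k)) ≃ Fin n) (U : Mat n)

def blockEmbedding : (∀ k, Matrix (Fin (p k)) (Fin (p k)) ℂ) →ₗ[ℂ] Mat n where
  toFun A := U * reindex e e (blockDiagonal' fun k => A k ⊗ₖ 1) * star U
  map_add' A B := by
    simp only [Pi.add_apply, add_kronecker, ← Pi.add_def, blockDiagonal'_add, reindex_apply,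
      submatrix_add, Matrix.mul_add, Matrix.add_mul]
  map_smul' c A := by
    simp only [Pi.smul_apply, smul_kronecker, ← Pi.smul_def, blockDiagonal'_smul, reindex_apply,
      submatrix_smul, Matrix.mul_smul, Matrix.smul_mul, RingHom.id_apply]

lemma blockEmbedding_apply (A : ∀ k, Matrix (Fin (p k)) (Fin (p k)) ℂ) :
    blockEmbedding e U A
      = U * ((blockDiagonal' fun k => A k ⊗ₖ 1).submatrix e.symm e.symm) * star U :=
  rfl

lemma blockEmbedding_star (A : ∀ k, Matrix (Fin (p k)) (Fin (p k)) ℂ) :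
    blockEmbedding e U (star A) = star (blockEmbedding e U A) := by
  simp only [blockEmbedding_apply, star_mul, Matrix.mul_assoc, Pi.star_apply, star_eq_conjTranspose,
    conjTranspose_submatrix, blockDiagonal'_conjTranspose, conjTranspose_kronecker,
    conjTranspose_one, conjTranspose_conjTranspose]

lemma blockEmbedding_one (hU : U * star U = 1) : blockEmbedding e U 1 = 1 := by
  simp only [blockEmbedding_apply, Pi.one_apply, one_kronecker_one, ← Pi.one_def,
    blockDiagonal'_one, submatrix_one_equiv, Matrix.mul_one, hU]

variable [Fintype ι]

lemma blockEmbedding_mul (hU : star U * U = 1) (A B : ∀ k, Matrix (Fin (p k)) (Fin (p k)) ℂ) :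
    blockEmbedding e U (A * B) = blockEmbedding e U A * blockEmbedding e U B := by
  have hUU (X Y : Mat n) : U * X * star U * (U * Y * star U) = U * (X * Y) * star U := by
    simp only [Matrix.mul_assoc, ← Matrix.mul_assoc (star U) U, hU, Matrix.one_mul]
  simp only [blockEmbedding_apply, hUU, submatrix_mul_equiv, ← blockDiagonal'_mul, Pi.mul_apply,
    ← mul_kronecker_mul, Matrix.mul_one]

lemma trace_blockEmbedding (hU : star U * U = 1) (A : ∀ k, Matrix (Fin (p k)) (Fin (p k)) ℂ) :
    (blockEmbedding e U A).trace = ∑ k, (q k : ℂ) * (A k).trace := by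
  simp [blockEmbedding_apply, trace_mul_cycle U, hU, trace_submatrix_equiv, trace_blockDiagonal',
    trace_kronecker, mul_comm]

variable {U}

lemma trace_star_blockEmbedding_mul (hU : star U * U = 1)
    (A B : ∀ k, Matrix (Fin (p k)) (Fin (p k)) ℂ) :
    (star (blockEmbedding e U A) * blockEmbedding e U B).trace
      = ∑ k, (q k : ℂ) * (star (A k) * B k).trace := by
  rw [← blockEmbedding_star, ← blockEmbedding_mul e U hU, trace_blockEmbedding e U hU]
  rfl

/-- The matrix units of the blocks, rescaled by `q_k^{-1/2}` because the block `k` is repeated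
`q k` times by `blockEmbedding`. -/
def blockUnitBasis (hq : ∀ k, 0 < q k) :
    Module.Basis (Σ k, Fin (p k) × Fin (p k)) ℂ (∀ k, Matrix (Fin (p k)) (Fin (p k)) ℂ) :=
  (Pi.basis fun k => stdBasis ℂ (Fin (p k)) (Fin (p k))).isUnitSMul
    (w := fun x => ((Real.sqrt (q x.1) : ℂ))⁻¹) fun x => by simpa using (hq x.1).ne'

lemma blockUnitBasis_apply (hq : ∀ k, 0 < q k) (x : Σ k, Fin (p k) × Fin (p k)) :
    blockUnitBasis hq x = Pi.single x.1 (single x.2.1 x.2.2 ((Real.sqrt (q x.1) : ℂ))⁻¹) := by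
  obtain ⟨k, a, b⟩ := x
  simp [blockUnitBasis, Module.Basis.isUnitSMul_apply, stdBasis_eq_single, ← Pi.single_smul]

lemma span_range_blockEmbedding_blockUnitBasis (hq : ∀ k, 0 < q k) :
    Submodule.span ℂ (Set.range fun x => blockEmbedding e U (blockUnitBasis hq x))
      = LinearMap.range (blockEmbedding e U) := by
  rw [← Function.comp_def, Set.range_comp, Submodule.span_image, (blockUnitBasis hq).span_eq,
    Submodule.map_top]

lemma hsOrthonormal_blockEmbedding_blockUnitBasis (hU : star U * U = 1) (hq : ∀ k, 0 < q k) :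
    HSOrthonormal fun x => blockEmbedding e U (blockUnitBasis hq x) := by
  rintro ⟨k, a, b⟩ ⟨l, c, d⟩
  rw [trace_star_blockEmbedding_mul e hU, blockUnitBasis_apply, blockUnitBasis_apply,
    Finset.sum_eq_single k (fun k' _ hk' => by simp [Pi.single_eq_of_ne hk']) (by simp)]
  by_cases hkl : k = l
  · subst hkl
    have hq0 : (q k : ℂ) ≠ 0 := by exact_mod_cast (hq k).ne'
    rw [Pi.single_eq_same, Pi.single_eq_same, star_eq_conjTranspose, conjTranspose_single,
      trace_single_mul, single_apply, smul_eq_mul, mul_ite, mul_zero, star_inv_sqrt_mul_inv_sqrt,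
      mul_ite, mul_zero, mul_inv_cancel₀ hq0]
    simp only [Sigma.mk.inj_iff, heq_eq_eq, Prod.mk.injEq, true_and, eq_comm]
  · simp [hkl]

lemma krausMap_blockEmbedding_blockUnitBasis_one (hU : star U * U = 1) (hq : ∀ k, 0 < q k) :
    krausMap (fun x => blockEmbedding e U (blockUnitBasis hq x)) 1
      = blockEmbedding e U fun k => ((p k : ℂ) * (q k : ℂ)⁻¹) • 1 := by
  simp only [krausMap, Matrix.mul_one, ← blockEmbedding_star, ← blockEmbedding_mul e U hU,
    ← map_sum]
  congr 1
  simp only [Fintype.sum_sigma, blockUnitBasis_apply, ← Pi.single_star, ← Pi.single_mul,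
    ← Pi.single_finsetSum, Finset.univ_sum_single]
  funext k
  refine (sum_single_mul_star_single _).trans ?_
  rw [Fintype.card_fin, star_inv_sqrt_mul_inv_sqrt]

end BlockEmbedding

theorem IsHomBalanced.exists_krausMap_one_eq_smul {n N : ℕ} {𝒜 : StarSubalgebra ℂ (Mat n)}
    (h𝒜 : IsHomBalanced 𝒜) {A : Fin N → Mat n} (hA : HSOrthonormal A)
    (hsp : Submodule.span ℂ (Set.range A) = Subalgebra.toSubmodule 𝒜.toSubalgebra) :
    ∃ c : ℂ, krausMap A 1 = c • 1 := by
  obtain ⟨ι, _, _, p, q, e, U, hU, hU', hpq, hbal, hform⟩ := h𝒜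
  have hq k := (hpq k).2
  have hrange : LinearMap.range (blockEmbedding e U) = Subalgebra.toSubmodule 𝒜.toSubalgebra := by
    ext X
    simp [hform X, blockEmbedding_apply, eq_comm]
  have hratio : (fun k => ((p k : ℂ) * (q k : ℂ)⁻¹) • (1 : Matrix (Fin (p k)) (Fin (p k)) ℂ))
      = ((∑ k, (p k : ℂ)) / ∑ k, (q k : ℂ)) • 1 := by
    funext k
    rw [← div_eq_mul_inv, Nat.cast_div_eq_sum_div_sum hq hbal]
    rfl
  refine ⟨(∑ k, (p k : ℂ)) / ∑ k, (q k : ℂ), ?_⟩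
  rw [hA.krausMap_eq_of_span_eq (hsOrthonormal_blockEmbedding_blockUnitBasis e hU' hq)
      (hsp.trans (hrange.symm.trans (span_range_blockEmbedding_blockUnitBasis e hq).symm)),
    krausMap_blockEmbedding_blockUnitBasis_one e hU' hq, hratio, map_smul,
    blockEmbedding_one e U hU]

theorem stmt17_general {n N : ℕ} (𝒜 : StarSubalgebra ℂ (Mat n)) (hhb : IsHomBalanced 𝒜)
    (A : Fin N → Mat n)
    (hON : ∀ i j, (star (A i) * A j).trace = if i = j then 1 else 0)
    (hsp : Submodule.span ℂ (Set.range A) = Subalgebra.toSubmodule 𝒜.toSubalgebra)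
    (E : Mat n →ₗ[ℂ] Mat n)
    (hE : IsHSProj (Subalgebra.toSubmodule
      (Subalgebra.centralizer ℂ (𝒜 : Set (Mat n)))) E) :
    ∀ X : Mat n, E X = ((n : ℂ) / (N : ℂ)) • ∑ j, A j * X * star (A j) := by
  intro X
  change E X = _ • krausMap A X
  rcases Nat.eq_zero_or_pos n with rfl | hn
  · exact Subsingleton.elim _ _
  have hON : HSOrthonormal A := hON
  obtain ⟨c, hc⟩ := hhb.exists_krausMap_one_eq_smul hON hsp
  have hAA : ∑ j, A j * star (A j) = c • 1 := by simpa [krausMap] using hc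
  have hN0 : (N : ℂ) ≠ 0 := by
    have : Nonempty (Fin n) := Fin.pos_iff_nonempty.mp hn
    exact_mod_cast (Fin.pos_iff_nonempty.mpr (Submodule.nonempty_of_one_mem_span
      ((𝒜.mem_iff_mem_span_of_span_eq hsp 1).mp (one_mem 𝒜)))).ne'
  have hscalar : star ((n : ℂ) / N) * c = 1 := by
    have hN : c * n = N := by simpa [hAA] using hON.trace_sum_mul_star
    rw [star_div₀, star_natCast, star_natCast, div_mul_eq_mul_div, mul_comm, hN, div_self hN0]
  refine hE.apply_eq_of_forall_trace
    (Subalgebra.smul_mem _ (hON.krausMap_mem_centralizer hsp X) _) fun M hM => ?_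
  have hcomm j : star (A j) * M = M * star (A j) :=
    (Subalgebra.mem_centralizer_iff ℂ).mp hM _
      (star_mem ((𝒜.mem_iff_mem_span_of_span_eq hsp _).mpr (Submodule.subset_span ⟨j, rfl⟩)))
  rw [star_smul, smul_mul_assoc, trace_smul, trace_star_krausMap_mul hcomm,
    hON.sum_star_mul_self_eq_sum_mul_star_self hsp, hAA, smul_mul_assoc, Matrix.one_mul,
    trace_smul, smul_smul, hscalar, one_smul]

/-- for a homogeneously balanced `𝒜` with Hilbert–Schmidt
orthonormal basis `A_1, …, A_N`, the trace-preserving expectation onto the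
commutant `𝒜'` is `X ↦ (n/N) Σⱼ Aⱼ X Aⱼ*`. -/
theorem stmt17 {n N : ℕ} (𝒜 : StarSubalgebra ℂ (Mat n)) (hhb : IsHomBalanced 𝒜)
    (A : Fin N → Mat n) (hA : ∀ j, A j ∈ 𝒜)
    (hON : ∀ i j, (star (A i) * A j).trace = if i = j then 1 else 0)
    (hsp : Submodule.span ℂ (Set.range A) = Subalgebra.toSubmodule 𝒜.toSubalgebra)
    (E : Mat n →ₗ[ℂ] Mat n)
    (hE : IsHSProj (Subalgebra.toSubmodule
      (Subalgebra.centralizer ℂ (𝒜 : Set (Mat n)))) E) :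
    ∀ X : Mat n, E X = ((n : ℂ) / (N : ℂ)) • ∑ j, A j * X * star (A j) :=
  stmt17_general 𝒜 hhb A hON hsp E hE
end
end
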